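/- arXiv:1711.04544 — 5 statements merged into one kernel-verified Lean document; each statement's English description precedes it below -/
import Mathlib

section
/- Let a_1, …, a_n be positive real numbers and let n ≥ 2 and l ≥ 1 be integers. Define f on (0,∞)^n by f(x_1,…,x_n) = a_1/x_1 + a_2·x_1/x_2 + ⋯ + a_n·(x_1⋯x_{n−1})/x_n + x_n^{1/l}, and set φ(a_1,…,a_n) := a_1^{2^{n−2}} a_2^{2^{n−3}} ⋯ a_{n−1} a_n. Then there exists a constant C(n,l) > 0 depending only on n and l such that min over (0,∞)^n of f equals C(n,l)·φ(a_1,…,a_n)^{1/(2^{n−1}+l)}, and moreover this minimum is attained at some point (x_1^0,…,x_n^0) ∈ (0,∞)^n with x_n^0 = (C(n,l)·l/(2^{n−1}+l))^l · φ(a_1,…,a_n)^{l/(2^{n−1}+l)}. -/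
/-!
Substitute `r j = x j / (x 0 ⋯ x (j-1))`. The `j`-th term of `f` becomes `a j / r j`, and since
`x 0 ⋯ x j = r j * (x 0 ⋯ x (j-1))²`, the last coordinate is the monomial
`x (n-1) = ∏ r j ^ e j` with `e (n-1) = 1`, `e j = 2 ^ (n-2-j)`: exactly the exponents of `φ`.
The substitution is a bijection of `(0,∞)ⁿ`, so `f` becomes `∑ a j / r j + ∏ r j ^ α j` with
`α j = e j / l`. Weighted AM-GM with weights `α j / s` and `1 / s`, where
`s = 1 + ∑ α j = (2^(n-1) + l) / l`, bounds this below by `s * c` with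
`c = ∏ (a j / α j) ^ (α j / s)`, and equality holds where every `a j / (α j * r j)` and the
monomial equal `c`. As `c` is a constant times `φ ^ (1 / (2^(n-1) + l))`, this gives the minimum,
and `x (n-1) = c ^ l` at the minimiser.
-/

open Finset Real

section AMGM
variable {ι : Type*} [Fintype ι] {α : ι → ℝ}

theorem one_add_sum_le_sum_div_add_prod_rpow (hα : ∀ i, 0 ≤ α i) {t : ι → ℝ}
    (ht : ∀ i, 0 < t i) : 1 + ∑ i, α i ≤ ∑ i, α i / t i + ∏ i, t i ^ α i := by
  set s := 1 + ∑ i, α i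
  have hs : 0 < s := by have := sum_nonneg fun i (_ : i ∈ univ) => hα i; linarith
  have hM : 0 < ∏ i, t i ^ α i := prod_pos fun i _ => rpow_pos_of_pos (ht i) _
  let w : Option ι → ℝ := fun o => o.elim (1 / s) fun i => α i / s
  let z : Option ι → ℝ := fun o => o.elim (∏ i, t i ^ α i) fun i => (t i)⁻¹
  have amgm := geom_mean_le_arith_mean_weighted (s := univ) w z
    (by
      rintro (_ | i) _ <;> simp only [w, Option.elim]
      exacts [by positivity, div_nonneg (hα i) hs.le])
    (by
      simp only [w, Fintype.sum_option, Option.elim, ← sum_div, ← add_div]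
      exact div_self hs.ne')
    (by
      rintro (_ | i) _ <;> simp only [z, Option.elim]
      exacts [hM.le, inv_nonneg.2 (ht i).le])
  have hgeom : ∏ o, z o ^ w o = 1 := by
    simp only [z, w, Fintype.prod_option, Option.elim]
    rw [← finsetProd_rpow _ _ fun i _ => (rpow_pos_of_pos (ht i) _).le, ← prod_mul_distrib]
    refine prod_eq_one fun i _ => ?_
    rw [← rpow_mul (ht i).le, inv_rpow (ht i).le, mul_one_div,
      mul_inv_cancel₀ (rpow_pos_of_pos (ht i) _).ne']
  have harith : ∑ o, w o * z o = (∏ i, t i ^ α i + ∑ i, α i / t i) / s := by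
    simp only [z, w, Fintype.sum_option, Option.elim, add_div, sum_div]
    congr 1
    · ring
    · exact sum_congr rfl fun i _ => by ring
  rw [hgeom, harith, le_div_iff₀ hs, one_mul] at amgm
  linarith

/-- At the minimiser of `∑ i, a i / r i + ∏ i, r i ^ α i`, every `a i / (α i * r i)` and the
monomial `∏ i, r i ^ α i` are equal to this level. -/
noncomputable def balancedLevel (a α : ι → ℝ) : ℝ :=
  ∏ i, (a i / α i) ^ (α i / (1 + ∑ j, α j))

theorem balancedLevel_pos {a : ι → ℝ} (ha : ∀ i, 0 < a i) (hα : ∀ i, 0 < α i) :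
    0 < balancedLevel a α :=
  prod_pos fun i _ => rpow_pos_of_pos (div_pos (ha i) (hα i)) _

theorem balancedLevel_eq_mul {a : ι → ℝ} (ha : ∀ i, 0 ≤ a i) (hα : ∀ i, 0 < α i) :
    balancedLevel a α = balancedLevel 1 α * ∏ i, a i ^ (α i / (1 + ∑ j, α j)) := by
  rw [balancedLevel, balancedLevel, ← prod_mul_distrib]
  refine prod_congr rfl fun i _ => ?_
  rw [Pi.one_apply, ← mul_rpow (one_div_pos.2 (hα i)).le (ha i), one_div_mul_eq_div]

theorem mul_one_add_sum_le_of_balanced (hα : ∀ i, 0 ≤ α i) {a r₀ r : ι → ℝ} {c : ℝ}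
    (hc : 0 < c) (hr₀ : ∀ i, 0 < r₀ i) (hbal : ∀ i, a i = α i * c * r₀ i)
    (hprod : ∏ i, r₀ i ^ α i = c) (hr : ∀ i, 0 < r i) :
    c * (1 + ∑ i, α i) ≤ ∑ i, a i / r i + ∏ i, r i ^ α i := by
  have hsum : ∑ i, a i / r i = c * ∑ i, α i / (r i / r₀ i) := by
    rw [mul_sum]
    exact sum_congr rfl fun i _ => by rw [hbal]; field_simp [(hr i).ne', (hr₀ i).ne']
  have hmono : ∏ i, r i ^ α i = c * ∏ i, (r i / r₀ i) ^ α i := by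
    rw [← hprod, ← prod_mul_distrib]
    refine prod_congr rfl fun i _ => ?_
    rw [← mul_rpow (hr₀ i).le (div_pos (hr i) (hr₀ i)).le, mul_div_cancel₀ _ (hr₀ i).ne']
  rw [hsum, hmono, ← mul_add]
  exact mul_le_mul_of_nonneg_left
    (one_add_sum_le_sum_div_add_prod_rpow hα fun i => div_pos (hr i) (hr₀ i)) hc.le

theorem sum_div_add_prod_rpow_of_balanced {a r₀ : ι → ℝ} {c : ℝ} (hr₀ : ∀ i, 0 < r₀ i)
    (hbal : ∀ i, a i = α i * c * r₀ i) (hprod : ∏ i, r₀ i ^ α i = c) :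
    ∑ i, a i / r₀ i + ∏ i, r₀ i ^ α i = c * (1 + ∑ i, α i) := by
  simp only [hbal, mul_div_cancel_right₀ _ (hr₀ _).ne', hprod, ← sum_mul]
  ring

theorem exists_balanced {a : ι → ℝ} (ha : ∀ i, 0 < a i) (hα : ∀ i, 0 < α i) :
    ∃ r₀ : ι → ℝ, (∀ i, 0 < r₀ i) ∧ (∀ i, a i = α i * balancedLevel a α * r₀ i) ∧
      ∏ i, r₀ i ^ α i = balancedLevel a α := by
  set s := 1 + ∑ j, α j with hs_def
  have hs : 0 < s := by have := sum_nonneg fun i (_ : i ∈ univ) => (hα i).le; linarith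
  have hpos : ∀ i, 0 < a i / α i := fun i => div_pos (ha i) (hα i)
  have hcs : balancedLevel a α ^ s = ∏ i, (a i / α i) ^ α i := by
    rw [balancedLevel, ← finsetProd_rpow _ _ fun i _ => (rpow_pos_of_pos (hpos i) _).le]
    refine prod_congr rfl fun i _ => ?_
    rw [← rpow_mul (hpos i).le, div_mul_cancel₀ _ hs.ne']
  set c := balancedLevel a α
  have hc : 0 < c := balancedLevel_pos ha hα
  refine ⟨fun i => a i / α i / c, fun i => div_pos (hpos i) hc,
    fun i => by field_simp [(hα i).ne'], ?_⟩
  simp only [div_rpow (hpos _).le hc.le, prod_div_distrib, ← rpow_sum_of_pos hc]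
  rw [← hcs, hs_def, rpow_add hc, rpow_one, mul_div_cancel_right₀ _ (rpow_pos_of_pos hc _).ne']

end AMGM

section PrefixRatio
variable {x r : ℕ → ℝ}

noncomputable def prefixRatio (x : ℕ → ℝ) (j : ℕ) : ℝ := x j / ∏ i ∈ range j, x i

noncomputable def dyadicProd (r : ℕ → ℝ) (j : ℕ) : ℝ := ∏ i ∈ range j, r i ^ 2 ^ (j - 1 - i)

noncomputable def ofPrefixRatio (r : ℕ → ℝ) (j : ℕ) : ℝ := r j * dyadicProd r j

theorem dyadicProd_succ (r : ℕ → ℝ) (j : ℕ) :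
    dyadicProd r (j + 1) = r j * dyadicProd r j ^ 2 := by
  rw [dyadicProd, dyadicProd, prod_range_succ, ← prod_pow, mul_comm]
  simp only [Nat.add_sub_cancel, Nat.sub_self, pow_zero, pow_one]
  congr 1
  refine prod_congr rfl fun i hi => ?_
  rw [← pow_mul, ← pow_succ]
  have := mem_range.1 hi
  congr 2
  omega

theorem dyadicProd_ne_zero (hr : ∀ i, r i ≠ 0) (j : ℕ) : dyadicProd r j ≠ 0 :=
  prod_ne_zero_iff.2 fun i _ => pow_ne_zero _ (hr i)

theorem prod_range_ofPrefixRatio (r : ℕ → ℝ) (j : ℕ) :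
    ∏ i ∈ range j, ofPrefixRatio r i = dyadicProd r j := by
  induction j with
  | zero => simp [dyadicProd]
  | succ j ih => rw [prod_range_succ, ih, dyadicProd_succ, ofPrefixRatio]; ring

theorem prefixRatio_ofPrefixRatio (hr : ∀ i, r i ≠ 0) : prefixRatio (ofPrefixRatio r) = r := by
  ext j
  rw [prefixRatio, prod_range_ofPrefixRatio, ofPrefixRatio,
    mul_div_cancel_right₀ _ (dyadicProd_ne_zero hr j)]

theorem dyadicProd_prefixRatio (hx : ∀ i, x i ≠ 0) (j : ℕ) :
    dyadicProd (prefixRatio x) j = ∏ i ∈ range j, x i := by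
  induction j with
  | zero => simp [dyadicProd]
  | succ j ih =>
    have hP : ∏ i ∈ range j, x i ≠ 0 := prod_ne_zero_iff.2 fun i _ => hx i
    rw [dyadicProd_succ, ih, prod_range_succ, prefixRatio]
    field_simp

theorem ofPrefixRatio_prefixRatio (hx : ∀ i, x i ≠ 0) : ofPrefixRatio (prefixRatio x) = x := by
  ext j
  rw [ofPrefixRatio, dyadicProd_prefixRatio hx, prefixRatio,
    div_mul_cancel₀ _ (prod_ne_zero_iff.2 fun i _ => hx i)]

theorem prefixRatio_pos (hx : ∀ i, 0 < x i) (j : ℕ) : 0 < prefixRatio x j :=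
  div_pos (hx j) (prod_pos fun i _ => hx i)

theorem ofPrefixRatio_pos (hr : ∀ i, 0 < r i) (j : ℕ) : 0 < ofPrefixRatio r j :=
  mul_pos (hr j) (prod_pos fun i _ => pow_pos (hr i) _)

def dyadicExponent (n i : ℕ) : ℕ := if i = n - 1 then 1 else 2 ^ (n - 2 - i)

theorem ofPrefixRatio_eq_prod_pow (r : ℕ → ℝ) {n : ℕ} (hn : n ≠ 0) :
    ofPrefixRatio r (n - 1) = ∏ i ∈ range n, r i ^ dyadicExponent n i := by
  obtain ⟨m, rfl⟩ := Nat.exists_eq_succ_of_ne_zero hn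
  rw [prod_range_succ, ofPrefixRatio, dyadicProd, mul_comm]
  simp only [dyadicExponent, Nat.succ_sub_one, if_true, pow_one]
  congr 1
  refine prod_congr rfl fun i hi => ?_
  rw [if_neg (by simp at hi; omega)]
  rfl

theorem sum_dyadicExponent {n : ℕ} (hn : n ≠ 0) :
    ∑ i ∈ range n, dyadicExponent n i = 2 ^ (n - 1) := by
  obtain ⟨m, rfl⟩ : ∃ m, n = m + 1 := ⟨n - 1, by omega⟩
  have hgeom : ∑ i ∈ range m, 2 ^ (m - 1 - i) = 2 ^ m - 1 := by
    rw [sum_range_reflect (2 ^ ·) m, Nat.geomSum_eq le_rfl, Nat.div_one]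
  have hlow : ∀ i ∈ range m, dyadicExponent (m + 1) i = 2 ^ (m - 1 - i) := fun i hi => by
    rw [dyadicExponent, if_neg (by simp at hi; omega)]
    rfl
  rw [sum_range_succ, sum_congr rfl hlow, hgeom, dyadicExponent, Nat.add_sub_cancel, if_pos rfl]
  have := Nat.one_le_two_pow (n := m)
  omega

end PrefixRatio

theorem prod_rpow_natCast_mul {ι : Type*} (s : Finset ι) {a : ι → ℝ} (ha : ∀ i ∈ s, 0 ≤ a i)
    (e : ι → ℕ) (t : ℝ) : ∏ i ∈ s, a i ^ ((e i : ℝ) * t) = (∏ i ∈ s, a i ^ e i) ^ t := by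
  rw [← finsetProd_rpow _ _ fun i hi => pow_nonneg (ha i hi) _]
  exact prod_congr rfl fun i hi => rpow_natCast_mul (ha i hi) _ _

section FinIndex
variable {n l : ℕ}

theorem prod_filter_lt_eq_prod_range (X : ℕ → ℝ) (j : Fin n) :
    ∏ i ∈ univ.filter (· < j), X i = ∏ i ∈ range j, X i := by
  rw [filter_gt_eq_Iio, ← Nat.Iio_eq_range, ← Fin.map_valEmbedding_Iio, prod_map]
  rfl

theorem exists_pos_extension {x : Fin n → ℝ} (hx : ∀ j, 0 < x j) :
    ∃ X : ℕ → ℝ, (∀ k, 0 < X k) ∧ (fun j : Fin n => X j) = x :=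
  ⟨fun k => if h : k < n then x ⟨k, h⟩ else 1,
    fun k => by dsimp only; split_ifs; exacts [hx _, one_pos], funext fun j => dif_pos j.isLt⟩

theorem exists_prefixRatio_eq {r : Fin n → ℝ} (hr : ∀ j, 0 < r j) :
    ∃ X : ℕ → ℝ, (∀ k, 0 < X k) ∧ ∀ j : Fin n, prefixRatio X j = r j := by
  obtain ⟨R, hR, rfl⟩ := exists_pos_extension hr
  exact ⟨ofPrefixRatio R, ofPrefixRatio_pos hR,
    fun j => by rw [prefixRatio_ofPrefixRatio fun k => (hR k).ne']⟩

theorem rpow_eq_prod_prefixRatio_rpow (hn : n ≠ 0) {X : ℕ → ℝ} (hX : ∀ k, 0 < X k) (t : ℝ) :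
    X (n - 1) ^ t = ∏ j : Fin n, prefixRatio X j ^ ((dyadicExponent n j : ℝ) * t) := by
  calc X (n - 1) ^ t = ofPrefixRatio (prefixRatio X) (n - 1) ^ t := by
        rw [ofPrefixRatio_prefixRatio fun k => (hX k).ne']
    _ = (∏ j : Fin n, prefixRatio X j ^ dyadicExponent n j) ^ t := by
        rw [ofPrefixRatio_eq_prod_pow _ hn,
          Fin.prod_univ_eq_prod_range (fun i => prefixRatio X i ^ dyadicExponent n i)]
    _ = _ := (prod_rpow_natCast_mul univ (a := fun j : Fin n => prefixRatio X j)
          (fun j _ => (prefixRatio_pos hX j).le) (fun j => dyadicExponent n j) t).symm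

noncomputable def dyadicWeight (n l : ℕ) (j : Fin n) : ℝ := dyadicExponent n j / l

theorem dyadicWeight_pos (hl : l ≠ 0) (j : Fin n) : 0 < dyadicWeight n l j := by
  have : 0 < dyadicExponent n j := by unfold dyadicExponent; split_ifs <;> positivity
  unfold dyadicWeight
  positivity

theorem one_add_sum_dyadicWeight (hn : n ≠ 0) (hl : l ≠ 0) :
    1 + ∑ j, dyadicWeight n l j = (2 ^ (n - 1) + l) / l := by
  simp only [dyadicWeight, ← sum_div]
  rw [Fin.sum_univ_eq_sum_range (fun i => (dyadicExponent n i : ℝ)), ← Nat.cast_sum,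
    sum_dyadicExponent hn]
  field_simp
  push_cast
  ring

theorem prod_rpow_dyadicWeight_div (hn : n ≠ 0) (hl : l ≠ 0) {a : Fin n → ℝ}
    (ha : ∀ j, 0 ≤ a j) :
    ∏ j, a j ^ (dyadicWeight n l j / (1 + ∑ k, dyadicWeight n l k)) =
      (∏ j, a j ^ dyadicExponent n j) ^ (1 / (2 ^ (n - 1) + l : ℝ)) := by
  have hβ : ∀ j, dyadicWeight n l j / (1 + ∑ k, dyadicWeight n l k) =
      (dyadicExponent n j : ℝ) * (1 / (2 ^ (n - 1) + l)) := fun j => by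
    rw [one_add_sum_dyadicWeight hn hl, dyadicWeight]
    field_simp
  simp only [hβ]
  exact prod_rpow_natCast_mul univ (fun j _ => ha j) (fun j => dyadicExponent n j) _

/-- The function `f` of the statement at the point `(X 0, …, X (n - 1))`. -/
noncomputable def objective (l : ℕ) (a : Fin n → ℝ) (X : ℕ → ℝ) : ℝ :=
  (∑ j : Fin n, a j * (∏ i ∈ univ.filter (· < j), X i) / X j) + X (n - 1) ^ ((1 : ℝ) / l)

theorem objective_eq (hn : n ≠ 0) (a : Fin n → ℝ) {X : ℕ → ℝ} (hX : ∀ k, 0 < X k) :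
    objective l a X =
      ∑ j : Fin n, a j / prefixRatio X j + ∏ j : Fin n, prefixRatio X j ^ dyadicWeight n l j := by
  rw [objective, rpow_eq_prod_prefixRatio_rpow hn hX]
  simp only [prod_filter_lt_eq_prod_range, prefixRatio, div_div_eq_mul_div, mul_one_div]
  rfl

theorem le_objective (hn : n ≠ 0) (hl : l ≠ 0) {a : Fin n → ℝ} (ha : ∀ j, 0 < a j)
    {X : ℕ → ℝ} (hX : ∀ k, 0 < X k) :
    (1 + ∑ j, dyadicWeight n l j) * balancedLevel a (dyadicWeight n l) ≤ objective l a X := by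
  obtain ⟨r₀, hr₀, hbal, hprod⟩ := exists_balanced ha (dyadicWeight_pos hl)
  rw [objective_eq hn a hX, mul_comm]
  exact mul_one_add_sum_le_of_balanced (fun j => (dyadicWeight_pos hl j).le)
    (balancedLevel_pos ha (dyadicWeight_pos hl)) hr₀ hbal hprod
    fun j => prefixRatio_pos hX j

theorem exists_objective_eq (hn : n ≠ 0) (hl : l ≠ 0) {a : Fin n → ℝ} (ha : ∀ j, 0 < a j) :
    ∃ X : ℕ → ℝ, (∀ k, 0 < X k) ∧
      objective l a X = (1 + ∑ j, dyadicWeight n l j) * balancedLevel a (dyadicWeight n l) ∧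
      X (n - 1) = balancedLevel a (dyadicWeight n l) ^ l := by
  obtain ⟨r₀, hr₀, hbal, hprod⟩ := exists_balanced ha (dyadicWeight_pos hl)
  obtain ⟨X, hX, hXr⟩ := exists_prefixRatio_eq hr₀
  have hlast : X (n - 1) ^ ((1 : ℝ) / l) = balancedLevel a (dyadicWeight n l) := by
    rw [rpow_eq_prod_prefixRatio_rpow hn hX, ← hprod]
    simp only [hXr, mul_one_div]
    rfl
  refine ⟨X, hX, ?_, ?_⟩
  · rw [objective_eq hn a hX, mul_comm, ← sum_div_add_prod_rpow_of_balanced hr₀ hbal hprod]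
    simp only [hXr]
  · rw [← hlast, one_div, rpow_inv_natCast_pow (hX _).le hl]

end FinIndex

/-- Minimization lemma: for positive `a_1, …, a_n` and integers `n ≥ 2`, `l ≥ 1`, the
function `f(x) = a_1/x_1 + a_2 x_1/x_2 + ⋯ + a_n (x_1⋯x_{n-1})/x_n + x_n^{1/l}` on
`(0,∞)^n` attains the minimum value `C(n,l) · φ(a)^{1/(2^{n-1}+l)}`, where
`φ(a) = a_1^{2^{n-2}} a_2^{2^{n-3}} ⋯ a_{n-1} a_n`, with `C(n,l) > 0` depending only on
`n, l`; moreover the minimum is attained at a point whose last coordinate is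
`(C(n,l)·l/(2^{n-1}+l))^l · φ(a)^{l/(2^{n-1}+l)}`. -/
theorem statement2 (n l : ℕ) (hn : 2 ≤ n) (hl : 1 ≤ l) :
    ∃ C : ℝ, 0 < C ∧
      ∀ a : Fin n → ℝ, (∀ i, 0 < a i) →
        IsLeast
          ((fun x : Fin n → ℝ =>
              (∑ j : Fin n, a j * (∏ i ∈ Finset.univ.filter (· < j), x i) / x j) +
                x ⟨n - 1, by omega⟩ ^ ((1 : ℝ) / l)) ''
            {x : Fin n → ℝ | ∀ i, 0 < x i})
          (C * (∏ j : Fin n,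
                a j ^ (if (j : ℕ) = n - 1 then 1 else 2 ^ (n - 2 - (j : ℕ)))) ^
              ((1 : ℝ) / ((2 : ℝ) ^ (n - 1) + l))) ∧
        ∃ x0 : Fin n → ℝ, (∀ i, 0 < x0 i) ∧
          ((∑ j : Fin n, a j * (∏ i ∈ Finset.univ.filter (· < j), x0 i) / x0 j) +
              x0 ⟨n - 1, by omega⟩ ^ ((1 : ℝ) / l)
            = C * (∏ j : Fin n,
                a j ^ (if (j : ℕ) = n - 1 then 1 else 2 ^ (n - 2 - (j : ℕ)))) ^
              ((1 : ℝ) / ((2 : ℝ) ^ (n - 1) + l))) ∧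
          x0 ⟨n - 1, by omega⟩ =
            (C * l / ((2 : ℝ) ^ (n - 1) + l)) ^ l *
              (∏ j : Fin n,
                a j ^ (if (j : ℕ) = n - 1 then 1 else 2 ^ (n - 2 - (j : ℕ)))) ^
                ((l : ℝ) / ((2 : ℝ) ^ (n - 1) + l)) := by
  have hn0 : n ≠ 0 := by omega
  have hl0 : l ≠ 0 := by omega
  refine ⟨(1 + ∑ j, dyadicWeight n l j) * balancedLevel 1 (dyadicWeight n l),
    mul_pos (one_add_sum_dyadicWeight hn0 hl0 ▸ by positivity)
      (balancedLevel_pos (fun _ => one_pos) (dyadicWeight_pos hl0)), fun a ha => ?_⟩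
  set φ := ∏ j : Fin n, a j ^ (if (j : ℕ) = n - 1 then 1 else 2 ^ (n - 2 - (j : ℕ)))
  have hmin : (1 + ∑ j, dyadicWeight n l j) * balancedLevel 1 (dyadicWeight n l) *
      φ ^ (1 / (2 ^ (n - 1) + l : ℝ)) =
      (1 + ∑ j, dyadicWeight n l j) * balancedLevel a (dyadicWeight n l) := by
    rw [balancedLevel_eq_mul (fun j => (ha j).le) (dyadicWeight_pos hl0),
      prod_rpow_dyadicWeight_div hn0 hl0 fun j => (ha j).le, mul_assoc]
    rfl
  obtain ⟨X, hX, hval, hlast⟩ := exists_objective_eq hn0 hl0 ha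
  refine ⟨⟨⟨fun j => X j, fun j => hX j, hval.trans hmin.symm⟩, ?_⟩,
    fun j => X j, fun j => hX j, hval.trans hmin.symm, hlast.trans ?_⟩
  · rintro _ ⟨x, hx, rfl⟩
    obtain ⟨Y, hY, rfl⟩ := exists_pos_extension hx
    exact hmin ▸ le_objective hn0 hl0 ha hY
  · rw [balancedLevel_eq_mul (fun j => (ha j).le) (dyadicWeight_pos hl0),
      prod_rpow_dyadicWeight_div hn0 hl0 fun j => (ha j).le, one_add_sum_dyadicWeight hn0 hl0,
      mul_pow, ← rpow_natCast (_ ^ _), ← rpow_mul (prod_pos fun j _ => pow_pos (ha j) _).le]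
    congr 2 <;> field_simp
end

section
/- Let P be a real polynomial of degree d on ℝ^n and let α be an admissible index for P with coefficient a_α; set μ(α) := 4/|a_α|^{1/|α|}. Then there exists a constant C > 0 depending only on n such that for every δ > 0 and every r > 0, vol_n(V_δ ∩ Δ_r^n) ≤ C·[d·μ(α)·δ^{1/|α|}·r^{n−1} + (d·μ(α)·δ^{1/|α|})^n]. In particular there is a constant C' > 0 depending only on n, d and |a_α|^{1/|α|} with vol_n(V_δ ∩ Δ_r^n) ≤ C'·[δ^{1/|α|}·r^{n−1} + δ^{n/|α|}]. -/
/-!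
Induction on the number of variables, after permuting coordinates so that `α` is the
lexicographically largest exponent of `P`. Writing `P = Q(y) x₁^{a₁} + (lower powers of x₁)`,
the polynomial `Q` in the remaining variables has lexicographically leading exponent
`(α₂, …, αₙ)` with the same coefficient `a`. Put `s = (δ/|a|)^{1/|α|}` and
`η = |a| s^{α₂ + ⋯ + αₙ}`. Where `|Q(y)| ≥ η`, the slice in `x₁` is a sublevel set of a
one-variable polynomial of degree `a₁` whose leading coefficient is at least `η` in size, so it has
length at most `4 a₁ s`; the part where `|Q(y)| ≤ η` lies in `(-r, r)` times a sublevel set of `Q`,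
which is bounded by induction.

The one-variable bound is a Remez-type inequality: a compact set of measure `m` contains `k + 1`
points at mutual distance at least `m / (k + 1)` (read off its distribution function), and by
Lagrange interpolation the leading coefficient of a degree `k` polynomial is a combination of its
values at these points.
-/

open MeasureTheory Metric MvPolynomial
open scoped ENNReal NNReal

/-- The open cube `Δ_r^n = (-r, r)^n` in `ℝ^n`. -/
def cube (n : ℕ) (r : ℝ) : Set (EuclideanSpace ℝ (Fin n)) :=
  {x | ∀ i, x i ∈ Set.Ioo (-r) r}

/-- The sublevel set `V_δ = {x ∈ ℝ^n : |P(x)| ≤ δ}`. -/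
def sublevel {n : ℕ} (P : MvPolynomial (Fin n) ℝ) (δ : ℝ) :
    Set (EuclideanSpace ℝ (Fin n)) :=
  {x | |eval (fun i => x i) P| ≤ δ}

/-- `α` is an admissible index (i.e. `x^α` is an admissible monomial) for the real
polynomial `P` on `ℝ^n`. -/
def IsAdmissibleIndex {n : ℕ} (P : MvPolynomial (Fin n) ℝ) (α : Fin n →₀ ℕ) : Prop :=
  MvPolynomial.coeff α P ≠ 0 ∧
  ∃ σ : Equiv.Perm (Fin n),
    (∃ h : 0 < n, 1 ≤ α (σ ⟨0, h⟩)) ∧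
    ∀ β : Fin n →₀ ℕ, β ≠ α → MvPolynomial.coeff β P ≠ 0 →
      ∃ j : Fin n, β (σ j) < α (σ j) ∧ ∀ k : Fin n, k < j → α (σ k) = β (σ k)

open Set

section OneVariable

open Polynomial

lemma lipschitzWith_toReal_volume_inter_Iic {E : Set ℝ} (hE : volume E ≠ ⊤) :
    LipschitzWith 1 fun t => (volume (E ∩ Iic t)).toReal := by
  have hfin : ∀ t, volume (E ∩ Iic t) ≠ ⊤ := fun t => measure_ne_top_of_subset inter_subset_left hE
  refine LipschitzWith.of_le_add_mul 1 fun x y => ?_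
  have hcover : E ∩ Iic x ⊆ (E ∩ Iic y) ∪ Ioc y x := by
    rintro t ⟨htE, htx⟩
    rcases le_or_gt t y with hty | hty
    · exact Or.inl ⟨htE, hty⟩
    · exact Or.inr ⟨hty, htx⟩
  have hle : volume (E ∩ Iic x) ≤ volume (E ∩ Iic y) + ENNReal.ofReal (dist x y) := by
    calc volume (E ∩ Iic x) ≤ volume (E ∩ Iic y) + volume (Ioc y x) :=
          (measure_mono hcover).trans (measure_union_le _ _)
      _ ≤ _ := by
          rw [Real.volume_Ioc, Real.dist_eq]
          gcongr
          exact le_abs_self _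
  have := ENNReal.toReal_mono (by finiteness) hle
  rwa [ENNReal.toReal_add (hfin y) ENNReal.ofReal_ne_top, ENNReal.toReal_ofReal dist_nonneg,
    ← one_mul (dist x y)] at this

lemma exists_mem_toReal_volume_inter_Iic_eq {E : Set ℝ} (hE : IsCompact E) {c : ℝ} (hc : 0 < c)
    (hcE : c ≤ (volume E).toReal) : ∃ t ∈ E, (volume (E ∩ Iic t)).toReal = c := by
  have hne : E.Nonempty := nonempty_iff_ne_empty.2 fun h => by simp [h] at hcE; linarith
  have hbot : (volume (E ∩ Iic (sInf E))).toReal = 0 := by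
    have : E ∩ Iic (sInf E) ⊆ {sInf E} := fun t ⟨htE, ht⟩ =>
      le_antisymm ht (csInf_le hE.bddBelow htE)
    simp [measure_mono_null this Real.volume_singleton]
  have htop : (volume (E ∩ Iic (sSup E))).toReal = (volume E).toReal := by
    rw [inter_eq_self_of_subset_left fun t ht => mem_Iic.2 (le_csSup hE.bddAbove ht)]
  obtain ⟨t₀, -, ht₀⟩ := intermediate_value_Icc
    ((csInf_le hE.bddBelow hne.some_mem).trans (le_csSup hE.bddAbove hne.some_mem))
    (lipschitzWith_toReal_volume_inter_Iic hE.measure_lt_top.ne).continuous.continuousOn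
    ⟨hbot ▸ hc.le, htop ▸ hcE⟩
  have hK : IsCompact (E ∩ Iic t₀) := hE.inter_right isClosed_Iic
  have hKne : (E ∩ Iic t₀).Nonempty :=
    nonempty_iff_ne_empty.2 fun h => by simp [h] at ht₀; linarith
  have hmax := hK.sSup_mem hKne
  refine ⟨sSup (E ∩ Iic t₀), hmax.1, ?_⟩
  have : E ∩ Iic (sSup (E ∩ Iic t₀)) = E ∩ Iic t₀ :=
    subset_antisymm (fun t ht => ⟨ht.1, mem_Iic.2 (le_trans ht.2 hmax.2)⟩)
      fun t ht => ⟨ht.1, le_csSup hK.bddAbove ht⟩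
  rw [this]
  exact ht₀

lemma exists_separated_points_of_isCompact {E : Set ℝ} (hE : IsCompact E) (hE0 : volume E ≠ 0)
    (k : ℕ) : ∃ t : Fin (k + 1) → ℝ, (∀ i, t i ∈ E) ∧
      ∀ i j, i ≠ j → (volume E).toReal / (k + 1) ≤ |t i - t j| := by
  set m := (volume E).toReal
  have hm : 0 < m := ENNReal.toReal_pos hE0 hE.measure_lt_top.ne
  have hpt : ∀ i : Fin (k + 1), ∃ t ∈ E, (volume (E ∩ Iic t)).toReal = (i + 1) * (m / (k + 1)) := by
    intro i
    refine exists_mem_toReal_volume_inter_Iic_eq hE (by positivity) ?_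
    rw [mul_div_assoc', div_le_iff₀ (by positivity)]
    have : (i : ℝ) + 1 ≤ k + 1 := by exact_mod_cast i.is_lt
    nlinarith
  choose t htE htF using hpt
  refine ⟨t, htE, fun i j hij => ?_⟩
  have hlip := (lipschitzWith_toReal_volume_inter_Iic hE.measure_lt_top.ne).dist_le_mul (t i) (t j)
  rw [htF, htF, Real.dist_eq, Real.dist_eq, NNReal.coe_one, one_mul, ← sub_mul, abs_mul,
    abs_of_pos (by positivity : 0 < m / (k + 1))] at hlip
  have : (1 : ℝ) ≤ |((i : ℝ) + 1) - (j + 1)| := by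
    have hij' : ((i : ℕ) : ℤ) ≠ (j : ℕ) := by exact_mod_cast Fin.val_ne_of_ne hij
    rw [add_sub_add_right_eq_sub]
    exact_mod_cast Int.one_le_abs (sub_ne_zero.2 hij')
  nlinarith [show 0 < m / (k + 1) by positivity]

open Finset in
lemma abs_coeff_mul_pow_le {p : ℝ[X]} {k : ℕ} (hp : p.natDegree ≤ k) {g δ : ℝ} (hg : 0 < g)
    (t : Fin (k + 1) → ℝ) (ht : ∀ i j, i ≠ j → g ≤ |t i - t j|)
    (hδ : ∀ i, |p.eval (t i)| ≤ δ) :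
    |p.coeff k| * g ^ k ≤ (k + 1) * δ := by
  have hinj : Function.Injective t := fun i j hij => by
    by_contra hne
    have := ht i j hne
    rw [hij, sub_self, abs_zero] at this
    linarith
  have hcard : #(univ : Finset (Fin (k + 1))) = k + 1 := card_fin _
  have hdeg : p.degree < #(univ : Finset (Fin (k + 1))) := by
    rw [hcard]
    exact degree_le_natDegree.trans_lt (by exact_mod_cast Nat.lt_succ_of_le hp)
  have hLagrange := Lagrange.coeff_eq_sum hinj.injOn hdeg
  rw [hcard, Nat.add_sub_cancel] at hLagrange
  have hterm : ∀ i, |p.eval (t i) / ∏ j ∈ univ.erase i, (t i - t j)| * g ^ k ≤ δ := by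
    intro i
    have hprod : g ^ k ≤ |∏ j ∈ univ.erase i, (t i - t j)| := by
      rw [abs_prod]
      calc g ^ k = ∏ _j ∈ univ.erase i, g := by
            rw [prod_const, card_erase_of_mem (mem_univ i), hcard, Nat.add_sub_cancel]
        _ ≤ _ := prod_le_prod (fun _ _ => hg.le) fun j hj => ht i j (ne_of_mem_erase hj).symm
    rw [abs_div, div_mul_eq_mul_div, div_le_iff₀ ((pow_pos hg k).trans_le hprod)]
    exact mul_le_mul (hδ i) hprod (pow_pos hg k).le ((abs_nonneg _).trans (hδ i))
  calc |p.coeff k| * g ^ k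
      ≤ ∑ i, |p.eval (t i) / ∏ j ∈ univ.erase i, (t i - t j)| * g ^ k := by
        rw [hLagrange, ← sum_mul]
        gcongr
        exact abs_sum_le_sum_abs _ _
    _ ≤ ∑ _i : Fin (k + 1), δ := sum_le_sum fun i _ => hterm i
    _ = (k + 1) * δ := by simp

lemma volume_abs_eval_le_le (p : ℝ[X]) (hp : 0 < p.natDegree) {δ s : ℝ} (hs : 0 ≤ s)
    (hδ : δ ≤ |p.leadingCoeff| * s ^ p.natDegree) :
    volume {t | |p.eval t| ≤ δ} ≤ ENNReal.ofReal (4 * p.natDegree * s) := by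
  set k := p.natDegree
  set E := {t | |p.eval t| ≤ δ}
  have hE : IsCompact E := by
    have : E = (fun t => p.eval t) ⁻¹' Icc (-δ) δ := by ext; simp [E, abs_le]
    exact this ▸ (isProperMap_eval p (natDegree_pos_iff_degree_pos.1 hp)).isCompact_preimage
      isCompact_Icc
  rcases eq_or_ne (volume E) 0 with h0 | h0
  · rw [h0]; exact zero_le
  obtain ⟨t, htE, ht⟩ := exists_separated_points_of_isCompact hE h0 k
  set m := (volume E).toReal
  set g := m / (k + 1)
  have hg : 0 < g := div_pos (ENNReal.toReal_pos h0 hE.measure_lt_top.ne) (by positivity)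
  have hlc : 0 < |p.leadingCoeff| :=
    abs_pos.2 (leadingCoeff_ne_zero.2 (ne_zero_of_natDegree_gt hp))
  have hcoeff := abs_coeff_mul_pow_le le_rfl hg t ht htE
  have hgk : g ^ k ≤ (2 * s) ^ k := by
    have hk2 : (k : ℝ) + 1 ≤ 2 ^ k := by exact_mod_cast Nat.lt_two_pow_self
    have : |p.leadingCoeff| * g ^ k ≤ |p.leadingCoeff| * (2 ^ k * s ^ k) := by
      calc |p.leadingCoeff| * g ^ k ≤ (k + 1) * δ := hcoeff
        _ ≤ 2 ^ k * (|p.leadingCoeff| * s ^ k) :=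
            mul_le_mul hk2 hδ ((abs_nonneg _).trans (htE 0)) (by positivity)
        _ = _ := by ring
    rw [mul_pow]
    exact le_of_mul_le_mul_left this hlc
  have hg2s : g ≤ 2 * s := (pow_le_pow_iff_left₀ hg.le (by positivity) hp.ne').1 hgk
  calc volume E = ENNReal.ofReal ((k + 1) * g) := by
        rw [mul_div_cancel₀ _ (by positivity), ENNReal.ofReal_toReal hE.measure_lt_top.ne]
    _ ≤ ENNReal.ofReal (4 * k * s) := by
        refine ENNReal.ofReal_le_ofReal ?_
        have : (1 : ℝ) ≤ k := by exact_mod_cast hp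
        nlinarith

end OneVariable

def openCube (n : ℕ) (r : ℝ) : Set (Fin n → ℝ) := univ.pi fun _ => Ioo (-r) r

lemma measurableSet_openCube (n : ℕ) (r : ℝ) : MeasurableSet (openCube n r) :=
  MeasurableSet.univ_pi fun _ => measurableSet_Ioo

lemma volume_openCube (n : ℕ) {r : ℝ} (hr : 0 ≤ r) :
    volume (openCube n r) = ENNReal.ofReal ((2 * r) ^ n) := by
  rw [openCube, Real.volume_pi_Ioo, Finset.prod_const, Finset.card_univ, Fintype.card_fin,
    ← ENNReal.ofReal_pow (by linarith), sub_neg_eq_add, two_mul]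

lemma cons_mem_openCube_iff {n : ℕ} {r t : ℝ} {y : Fin n → ℝ} :
    (Fin.cons t y : Fin (n + 1) → ℝ) ∈ openCube (n + 1) r ↔ t ∈ Ioo (-r) r ∧ y ∈ openCube n r := by
  simp [openCube, Fin.forall_fin_succ]

lemma volume_eq_lintegral_volume_slice {n : ℕ} {S : Set (Fin (n + 1) → ℝ)} (hS : MeasurableSet S) :
    volume S = ∫⁻ y : Fin n → ℝ, volume {t : ℝ | Fin.cons t y ∈ S} := by
  set e := MeasurableEquiv.piFinSuccAbove (fun _ : Fin (n + 1) => ℝ) 0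
  have he : e.symm ⁻¹' S = {p : ℝ × (Fin n → ℝ) | Fin.cons p.1 p.2 ∈ S} := by
    ext p
    simp [e]
    rfl
  rw [← (volume_preserving_piFinSuccAbove (fun _ : Fin (n + 1) => ℝ) 0).symm.measure_preimage_equiv,
    he, Measure.volume_eq_prod, Measure.prod_apply_symm]
  · rfl
  · rw [← he]; exact e.symm.measurable hS

lemma volume_le_mul_of_volume_slice_le {n : ℕ} {S : Set (Fin (n + 1) → ℝ)} (hS : MeasurableSet S)
    {W : Set (Fin n → ℝ)} (hW : MeasurableSet W) (hSW : ∀ x ∈ S, Fin.tail x ∈ W)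
    {c : ENNReal} (hc : ∀ y ∈ W, volume {t : ℝ | Fin.cons t y ∈ S} ≤ c) :
    volume S ≤ c * volume W := by
  rw [volume_eq_lintegral_volume_slice hS, ← lintegral_indicator_const hW]
  refine lintegral_mono fun y => ?_
  by_cases hy : y ∈ W
  · simpa [indicator_of_mem hy] using hc y hy
  · have : {t : ℝ | Fin.cons t y ∈ S} = ∅ :=
      eq_empty_of_forall_notMem fun t ht => hy (by simpa using hSW _ ht)
    simp [this]

lemma toLex_cons_le_toLex_cons_iff {n : ℕ} {a b : ℕ} {β γ : Fin n →₀ ℕ} :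
    toLex (Finsupp.cons a β) ≤ toLex (Finsupp.cons b γ) ↔ a < b ∨ a = b ∧ toLex β ≤ toLex γ := by
  have hlt : toLex (Finsupp.cons a β) < toLex (Finsupp.cons b γ) ↔
      a < b ∨ a = b ∧ toLex β < toLex γ := by
    have := Fin.pi_lex_lt_cons_cons (α := fun _ => ℕ) (x₀ := a) (y₀ := b) (x := ⇑β) (y := ⇑γ)
      (fun {_} => (· < ·))
    rw [Pi.lex_eq_finsupp_lex] at this
    exact this
  rw [le_iff_lt_or_eq, le_iff_lt_or_eq, hlt, toLex_inj, toLex_inj]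
  constructor
  · rintro ((h | ⟨rfl, h⟩) | h)
    · exact Or.inl h
    · exact Or.inr ⟨rfl, Or.inl h⟩
    · obtain ⟨rfl, rfl⟩ := Finsupp.cons_injective2 h
      exact Or.inr ⟨rfl, Or.inr rfl⟩
  · rintro (h | ⟨rfl, h | rfl⟩)
    · exact Or.inl (Or.inl h)
    · exact Or.inl (Or.inr ⟨rfl, h⟩)
    · exact Or.inr rfl

section LexLeading

variable {R : Type*} [CommSemiring R] {n : ℕ} {P : MvPolynomial (Fin (n + 1)) R}
  {α : Fin (n + 1) →₀ ℕ}

lemma natDegree_finSuccEquiv_le_of_lex (hmax : ∀ β, coeff β P ≠ 0 → toLex β ≤ toLex α) :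
    (finSuccEquiv R n P).natDegree ≤ α 0 := by
  refine Polynomial.natDegree_le_iff_coeff_eq_zero.2 fun j hj => ?_
  ext β
  rw [finSuccEquiv_coeff_coeff, coeff_zero]
  by_contra h
  have := hmax _ h
  rw [← Finsupp.cons_tail α, toLex_cons_le_toLex_cons_iff] at this
  omega

lemma coeff_coeff_finSuccEquiv_tail :
    coeff (Finsupp.tail α) ((finSuccEquiv R n P).coeff (α 0)) = coeff α P := by
  rw [finSuccEquiv_coeff_coeff, Finsupp.cons_tail]

lemma toLex_le_tail_of_coeff_coeff_finSuccEquiv_ne_zero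
    (hmax : ∀ β, coeff β P ≠ 0 → toLex β ≤ toLex α) {β : Fin n →₀ ℕ}
    (hβ : coeff β ((finSuccEquiv R n P).coeff (α 0)) ≠ 0) : toLex β ≤ toLex (Finsupp.tail α) := by
  rw [finSuccEquiv_coeff_coeff] at hβ
  have := hmax _ hβ
  rw [← Finsupp.cons_tail α, toLex_cons_le_toLex_cons_iff] at this
  simpa using this

lemma coeff_finSuccEquiv_eq_C_of_tail_eq_zero (hmax : ∀ β, coeff β P ≠ 0 → toLex β ≤ toLex α)
    (htail : Finsupp.tail α = 0) : (finSuccEquiv R n P).coeff (α 0) = C (coeff α P) := by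
  ext β
  rw [coeff_C]
  split_ifs with hβ
  · rw [← hβ, ← htail, coeff_coeff_finSuccEquiv_tail]
  · by_contra hne
    have := toLex_le_tail_of_coeff_coeff_finSuccEquiv_ne_zero hmax hne
    rw [htail] at this
    exact hβ (by simpa using this : β = 0).symm

end LexLeading

lemma eval_eq_eval_tail_of_natDegree_finSuccEquiv_eq_zero {R : Type*} [CommSemiring R] {n : ℕ}
    {P : MvPolynomial (Fin (n + 1)) R} (hP : (finSuccEquiv R n P).natDegree = 0)
    (x : Fin (n + 1) → R) : eval x P = eval (Fin.tail x) ((finSuccEquiv R n P).coeff 0) := by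
  rw [← Fin.cons_self_tail x, eval_eq_eval_mv_eval', Fin.tail_cons,
    Polynomial.eq_C_of_natDegree_eq_zero hP, Polynomial.map_C, Polynomial.eval_C,
    Polynomial.coeff_C_zero]

attribute [local fun_prop] MvPolynomial.continuous_eval

lemma volume_sublevel_inter_le_of_le_abs_coeff {n : ℕ} (P : MvPolynomial (Fin (n + 1)) ℝ) {k : ℕ}
    (hk : 0 < k) (hq : (finSuccEquiv ℝ n P).natDegree ≤ k) {δ η s r : ℝ} (hη : 0 < η)
    (hs : 0 ≤ s) (hδ : δ ≤ η * s ^ k) (hr : 0 ≤ r) :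
    volume ({x | |eval x P| ≤ δ} ∩ openCube (n + 1) r ∩
        {x | η ≤ |eval (Fin.tail x) ((finSuccEquiv ℝ n P).coeff k)|}) ≤
      ENNReal.ofReal (4 * k * s * (2 * r) ^ n) := by
  set q := finSuccEquiv ℝ n P
  have hS : MeasurableSet ({x | |eval x P| ≤ δ} ∩ openCube (n + 1) r ∩
      {x | η ≤ |eval (Fin.tail x) (q.coeff k)|}) :=
    ((measurableSet_le (by fun_prop) (by fun_prop)).inter (measurableSet_openCube _ _)).inter
      (measurableSet_le (by fun_prop) (by fun_prop))
  have hW : MeasurableSet (openCube n r ∩ {y | η ≤ |eval y (q.coeff k)|}) :=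
    (measurableSet_openCube _ _).inter (measurableSet_le (by fun_prop) (by fun_prop))
  refine (volume_le_mul_of_volume_slice_le (c := ENNReal.ofReal (4 * k * s)) hS hW ?_
    fun y hy => ?_).trans ?_
  · rintro x ⟨⟨-, hx⟩, hQ⟩
    rw [← Fin.cons_self_tail x, cons_mem_openCube_iff] at hx
    exact ⟨hx.2, hQ⟩
  · set p := q.map (eval y)
    have hpk : p.coeff k = eval y (q.coeff k) := Polynomial.coeff_map _ _
    have hpdeg : p.natDegree = k := by
      refine le_antisymm (Polynomial.natDegree_map_le.trans hq)
        (Polynomial.le_natDegree_of_ne_zero ?_)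
      rw [hpk]
      exact abs_pos.1 (hη.trans_le hy.2)
    have hlc : p.leadingCoeff = eval y (q.coeff k) := by rw [Polynomial.leadingCoeff, hpdeg, hpk]
    calc volume {t : ℝ | (Fin.cons t y : Fin (n + 1) → ℝ) ∈ _}
        ≤ volume {t | |Polynomial.eval t p| ≤ δ} := by
          refine measure_mono fun t ht => ?_
          have : |eval (Fin.cons t y) P| ≤ δ := ht.1.1
          rwa [eval_eq_eval_mv_eval'] at this
      _ ≤ ENNReal.ofReal (4 * p.natDegree * s) := by
          refine volume_abs_eval_le_le p (hpdeg ▸ hk) hs (hδ.trans ?_)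
          rw [hlc, hpdeg]
          exact mul_le_mul_of_nonneg_right hy.2 (by positivity)
      _ = ENNReal.ofReal (4 * k * s) := by rw [hpdeg]
  · calc ENNReal.ofReal (4 * k * s) * volume (openCube n r ∩ {y | η ≤ |eval y (q.coeff k)|})
        ≤ ENNReal.ofReal (4 * k * s) * volume (openCube n r) := by gcongr; exact inter_subset_left
      _ = ENNReal.ofReal (4 * k * s * (2 * r) ^ n) := by
          rw [volume_openCube n hr, ← ENNReal.ofReal_mul (by positivity)]

lemma volume_openCube_inter_tail_preimage_le {n : ℕ} {W : Set (Fin n → ℝ)} (hW : MeasurableSet W)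
    (r : ℝ) : volume (openCube (n + 1) r ∩ Fin.tail ⁻¹' W) ≤
      ENNReal.ofReal (2 * r) * volume (W ∩ openCube n r) := by
  have hS : MeasurableSet (openCube (n + 1) r ∩ Fin.tail ⁻¹' W) :=
    (measurableSet_openCube _ _).inter (hW.preimage (by fun_prop))
  refine volume_le_mul_of_volume_slice_le hS (hW.inter (measurableSet_openCube _ _)) ?_
    fun y _ => ?_
  · rintro x ⟨hx, hxW⟩
    rw [← Fin.cons_self_tail x, cons_mem_openCube_iff] at hx
    exact ⟨hxW, hx.2⟩
  · calc volume {t | Fin.cons t y ∈ openCube (n + 1) r ∩ Fin.tail ⁻¹' W}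
        ≤ volume (Ioo (-r) r) := measure_mono fun t ht => (cons_mem_openCube_iff.1 ht.1).1
      _ = ENNReal.ofReal (2 * r) := by rw [Real.volume_Ioo, sub_neg_eq_add, two_mul]

lemma mul_pow_le_mul_pow_add_pow_succ {T r : ℝ} (hT : 0 ≤ T) (hr : 0 ≤ r) {n : ℕ} (hn : n ≠ 0) :
    r * T ^ n ≤ T * r ^ n + T ^ (n + 1) := by
  rcases le_total T r with h | h
  · obtain ⟨m, rfl⟩ := Nat.exists_eq_add_one_of_ne_zero hn
    have : r * T ^ (m + 1) ≤ T * r ^ (m + 1) := by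
      calc r * T ^ (m + 1) = T * (r * T ^ m) := by ring
        _ ≤ T * (r * r ^ m) := by gcongr
        _ = T * r ^ (m + 1) := by ring
    linarith [pow_nonneg hT (m + 2)]
  · calc r * T ^ n ≤ T * T ^ n := by gcongr
      _ ≤ T * r ^ n + T ^ (n + 1) := by rw [← pow_succ']; linarith [mul_nonneg hT (pow_nonneg hr n)]

lemma two_pow_mul_add_le_eight_pow_succ_mul {n : ℕ} (hn : n ≠ 0) {T r : ℝ} (hT : 0 ≤ T)
    (hr : 0 ≤ r) :
    2 ^ n * (T * r ^ n) + 2 * r * (8 ^ n * (T * r ^ (n - 1) + T ^ n)) ≤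
      8 ^ (n + 1) * (T * r ^ n + T ^ (n + 1)) := by
  have hrn : r * r ^ (n - 1) = r ^ n := by rw [← pow_succ', Nat.sub_add_cancel (by omega)]
  have h2 : (2 : ℝ) ^ n ≤ 8 ^ n := pow_le_pow_left₀ (by norm_num) (by norm_num) n
  have key := mul_pow_le_mul_pow_add_pow_succ hT hr hn
  have hTr : 0 ≤ T * r ^ n := by positivity
  have hTn : 0 ≤ T ^ (n + 1) := by positivity
  have h8 : (0 : ℝ) ≤ 8 ^ n := by positivity
  calc 2 ^ n * (T * r ^ n) + 2 * r * (8 ^ n * (T * r ^ (n - 1) + T ^ n))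
      = 2 ^ n * (T * r ^ n) + 8 ^ n * (2 * (T * r ^ n) + 2 * (r * T ^ n)) := by
        rw [← hrn]; ring
    _ ≤ 8 ^ n * (T * r ^ n) + 8 ^ n * (2 * (T * r ^ n) + 2 * (T * r ^ n + T ^ (n + 1))) := by
        gcongr
    _ ≤ 8 ^ (n + 1) * (T * r ^ n + T ^ (n + 1)) := by
        rw [pow_succ (8 : ℝ)]; nlinarith [mul_nonneg h8 hTr, mul_nonneg h8 hTn]

lemma two_pow_mul_le_eight_pow_succ_mul (n : ℕ) {T r : ℝ} (hT : 0 ≤ T) (hr : 0 ≤ r) :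
    2 ^ n * (T * r ^ n) ≤ 8 ^ (n + 1) * (T * r ^ n + T ^ (n + 1)) := by
  calc 2 ^ n * (T * r ^ n) ≤ 8 ^ (n + 1) * (T * r ^ n) := by
        gcongr
        exact (pow_le_pow_left₀ (by norm_num) (by norm_num) n).trans
          (pow_le_pow_right₀ (by norm_num) n.le_succ)
    _ ≤ 8 ^ (n + 1) * (T * r ^ n + T ^ (n + 1)) := by
        gcongr
        exact le_add_of_nonneg_right (by positivity)

lemma sum_le_totalDegree {σ : Type*} [Fintype σ] {P : MvPolynomial σ ℝ} {α : σ →₀ ℕ}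
    (hα : coeff α P ≠ 0) : ∑ i, α i ≤ P.totalDegree := by
  simpa [Finsupp.sum_fintype] using le_totalDegree (mem_support_iff.2 hα)

lemma volume_sublevel_inter_le_of_lex {n : ℕ} {P : MvPolynomial (Fin (n + 1)) ℝ}
    {α : Fin (n + 1) →₀ ℕ} (hα : coeff α P ≠ 0) (hmax : ∀ β, coeff β P ≠ 0 → toLex β ≤ toLex α)
    (ha : 0 < α 0) {δ η s r : ℝ} (hη : 0 < η) (hs : 0 ≤ s) (hδ : δ ≤ η * s ^ α 0) (hr : 0 ≤ r) :
    volume ({x | |eval x P| ≤ δ} ∩ openCube (n + 1) r ∩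
        {x | η ≤ |eval (Fin.tail x) ((finSuccEquiv ℝ n P).coeff (α 0))|}) ≤
      ENNReal.ofReal (2 ^ n * (4 * P.totalDegree * s * r ^ n)) := by
  refine (volume_sublevel_inter_le_of_le_abs_coeff P ha (natDegree_finSuccEquiv_le_of_lex hmax)
    hη hs hδ hr).trans (ENNReal.ofReal_le_ofReal ?_)
  have : (α 0 : ℝ) ≤ P.totalDegree := by
    exact_mod_cast (Finset.single_le_sum (fun i _ => Nat.zero_le _) (Finset.mem_univ _)).trans
      (sum_le_totalDegree hα)
  calc 4 * (α 0 : ℝ) * s * (2 * r) ^ n ≤ 4 * P.totalDegree * s * (2 * r) ^ n := by gcongr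
    _ = 2 ^ n * (4 * P.totalDegree * s * r ^ n) := by rw [mul_pow]; ring

lemma volume_sublevel_inter_openCube_succ_le {n : ℕ} {P : MvPolynomial (Fin (n + 1)) ℝ}
    {α : Fin (n + 1) →₀ ℕ} (hα : coeff α P ≠ 0) (hmax : ∀ β, coeff β P ≠ 0 → toLex β ≤ toLex α)
    (hα0 : 0 < ∑ i, α i) {δ s r : ℝ} (hs : 0 < s) (hδ : δ ≤ |coeff α P| * s ^ ∑ i, α i)
    (hr : 0 ≤ r)
    (hsmall : 0 < ∑ i, Finsupp.tail α i → ∀ η ≤ |coeff α P| * s ^ ∑ i, Finsupp.tail α i,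
      volume (openCube (n + 1) r ∩
          Fin.tail ⁻¹' {y | |eval y ((finSuccEquiv ℝ n P).coeff (α 0))| ≤ η}) ≤
        ENNReal.ofReal (2 * r * (8 ^ n *
          (4 * P.totalDegree * s * r ^ (n - 1) + (4 * P.totalDegree * s) ^ n)))) :
    volume ({x | |eval x P| ≤ δ} ∩ openCube (n + 1) r) ≤
      ENNReal.ofReal (8 ^ (n + 1) *
        (4 * P.totalDegree * s * r ^ n + (4 * P.totalDegree * s) ^ (n + 1))) := by
  set Q := (finSuccEquiv ℝ n P).coeff (α 0)
  set T := 4 * (P.totalDegree : ℝ) * s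
  have hT : 0 ≤ T := by positivity
  have hsum : ∑ i, α i = α 0 + ∑ i, Finsupp.tail α i := Fin.sum_univ_succ _
  rcases Nat.eq_zero_or_pos (∑ i, Finsupp.tail α i) with hm | hm
  · have hQ : Q = C (coeff α P) := coeff_finSuccEquiv_eq_C_of_tail_eq_zero hmax
      (by ext i; simp_all [Finset.sum_eq_zero_iff])
    have hcover : {x | |eval x P| ≤ δ} ∩ openCube (n + 1) r ⊆
        {x | |eval x P| ≤ δ} ∩ openCube (n + 1) r ∩ {x | |coeff α P| ≤ |eval (Fin.tail x) Q|} :=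
      fun x hx => ⟨hx, by simp [hQ]⟩
    exact (measure_mono hcover).trans ((volume_sublevel_inter_le_of_lex hα hmax (by omega)
      (abs_pos.2 hα) hs.le (by rwa [hsum, hm, add_zero] at hδ) hr).trans
        (ENNReal.ofReal_le_ofReal (two_pow_mul_le_eight_pow_succ_mul n hT hr)))
  have hn : n ≠ 0 := by rintro rfl; simp at hm
  have hbound := two_pow_mul_add_le_eight_pow_succ_mul hn hT hr
  rcases Nat.eq_zero_or_pos (α 0) with ha | ha
  · have hPQ := eval_eq_eval_tail_of_natDegree_finSuccEquiv_eq_zero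
      (Nat.le_zero.1 (ha ▸ natDegree_finSuccEquiv_le_of_lex hmax))
    have hcover : {x | |eval x P| ≤ δ} ∩ openCube (n + 1) r ⊆
        openCube (n + 1) r ∩ Fin.tail ⁻¹' {y | |eval y Q| ≤ δ} :=
      fun x hx => ⟨hx.2, by simpa [Q, ha, ← hPQ] using hx.1⟩
    refine (measure_mono hcover).trans
      ((hsmall hm δ (by rwa [hsum, ha, zero_add] at hδ)).trans (ENNReal.ofReal_le_ofReal ?_))
    nlinarith [pow_nonneg (zero_le_two : (0 : ℝ) ≤ 2) n, mul_nonneg hT (pow_nonneg hr n)]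
  set η := |coeff α P| * s ^ ∑ i, Finsupp.tail α i
  have hcover : {x | |eval x P| ≤ δ} ∩ openCube (n + 1) r ⊆
      ({x | |eval x P| ≤ δ} ∩ openCube (n + 1) r ∩ {x | η ≤ |eval (Fin.tail x) Q|}) ∪
        (openCube (n + 1) r ∩ Fin.tail ⁻¹' {y | |eval y Q| ≤ η}) := fun x hx =>
    (le_total η |eval (Fin.tail x) Q|).imp (fun h => ⟨hx, h⟩) fun h => ⟨hx.2, h⟩
  refine (measure_mono hcover).trans ((measure_union_le _ _).trans ?_)
  refine (add_le_add (volume_sublevel_inter_le_of_lex hα hmax ha (by positivity) hs.le ?_ hr)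
    (hsmall hm η le_rfl)).trans ?_
  · rw [hsum, pow_add] at hδ; linarith
  rw [← ENNReal.ofReal_add (by positivity) (by positivity)]
  exact ENNReal.ofReal_le_ofReal hbound

theorem volume_sublevel_inter_openCube_le_of_lex {n : ℕ} (P : MvPolynomial (Fin n) ℝ)
    (α : Fin n →₀ ℕ) (hα : coeff α P ≠ 0) (hmax : ∀ β, coeff β P ≠ 0 → toLex β ≤ toLex α)
    (hα0 : 0 < ∑ i, α i) {δ s r : ℝ} (hs : 0 < s) (hδ : δ ≤ |coeff α P| * s ^ ∑ i, α i)
    (hr : 0 ≤ r) :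
    volume ({x | |eval x P| ≤ δ} ∩ openCube n r) ≤
      ENNReal.ofReal (8 ^ n *
        (4 * P.totalDegree * s * r ^ (n - 1) + (4 * P.totalDegree * s) ^ n)) := by
  induction n generalizing δ with
  | zero => simp at hα0
  | succ n ih =>
  rw [Nat.add_sub_cancel]
  refine volume_sublevel_inter_openCube_succ_le hα hmax hα0 hs hδ hr fun hm η hη => ?_
  have hQα := coeff_coeff_finSuccEquiv_tail (P := P) (α := α)
  have hQd := totalDegree_coeff_finSuccEquiv_add_le P (α 0)
    fun h => hα (by rw [← hQα, h, coeff_zero])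
  refine (volume_openCube_inter_tail_preimage_le
    (measurableSet_le (by fun_prop) (by fun_prop)) r).trans ?_
  rw [ENNReal.ofReal_mul (by positivity : (0 : ℝ) ≤ 2 * r)]
  gcongr
  refine (ih _ _ (hQα ▸ hα)
    (fun β hβ => toLex_le_tail_of_coeff_coeff_finSuccEquiv_ne_zero hmax hβ) hm
    (hQα ▸ hη)).trans (ENNReal.ofReal_le_ofReal ?_)
  have : (((finSuccEquiv ℝ n P).coeff (α 0)).totalDegree : ℝ) ≤ P.totalDegree := by
    exact_mod_cast (Nat.le_add_right _ _).trans hQd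
  gcongr

lemma volume_sublevel_inter_cube {n : ℕ} (P : MvPolynomial (Fin n) ℝ) (δ r : ℝ) :
    volume (sublevel P δ ∩ cube n r) = volume ({x | |eval x P| ≤ δ} ∩ openCube n r) := by
  rw [← (EuclideanSpace.volume_preserving_symm_measurableEquiv_toLp (Fin n)).measure_preimage_equiv]
  congr 1
  ext x
  simp [sublevel, cube, openCube]

lemma volume_sublevel_rename_inter_openCube {n : ℕ} (e : Fin n ≃ Fin n)
    (P : MvPolynomial (Fin n) ℝ) (δ r : ℝ) :
    volume ({x | |eval x (rename e P)| ≤ δ} ∩ openCube n r) =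
      volume ({x | |eval x P| ≤ δ} ∩ openCube n r) := by
  have hcomp : ∀ x : Fin n → ℝ, MeasurableEquiv.piCongrLeft (fun _ => ℝ) e.symm x = x ∘ e :=
    fun x => funext fun i => by
      simp [MeasurableEquiv.piCongrLeft, Equiv.piCongrLeft, Equiv.piCongrLeft']
  rw [← (volume_measurePreserving_piCongrLeft (fun _ => ℝ) e.symm).measure_preimage_equiv
    ({x | |eval x P| ≤ δ} ∩ openCube n r)]
  congr 1
  ext x
  simp only [mem_inter_iff, mem_preimage, hcomp, openCube, mem_univ_pi, Function.comp_apply,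
    e.forall_congr_right (q := fun i => x i ∈ Ioo (-r) r)]
  simp [eval_rename]

lemma IsAdmissibleIndex.sum_pos {n : ℕ} {P : MvPolynomial (Fin n) ℝ} {α : Fin n →₀ ℕ}
    (h : IsAdmissibleIndex P α) : 0 < ∑ i, α i := by
  obtain ⟨-, σ, ⟨hn, hσ⟩, -⟩ := h
  exact hσ.trans (Finset.single_le_sum (fun i _ => Nat.zero_le _) (Finset.mem_univ _))

theorem volume_sublevel_inter_cube_le_of_isAdmissibleIndex {n : ℕ} {P : MvPolynomial (Fin n) ℝ}
    {α : Fin n →₀ ℕ} (h : IsAdmissibleIndex P α) {δ s r : ℝ} (hs : 0 < s)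
    (hδ : δ ≤ |coeff α P| * s ^ ∑ i, α i) (hr : 0 ≤ r) :
    volume (sublevel P δ ∩ cube n r) ≤
      ENNReal.ofReal (8 ^ n *
        (4 * P.totalDegree * s * r ^ (n - 1) + (4 * P.totalDegree * s) ^ n)) := by
  have hpos := h.sum_pos
  obtain ⟨hα, σ, -, hlex⟩ := h
  have hcoeff : ∀ β, coeff (Finsupp.equivMapDomain σ.symm β) (rename σ.symm P) = coeff β P :=
    fun β => by
      rw [Finsupp.equivMapDomain_eq_mapDomain, coeff_rename_mapDomain _ σ.symm.injective]
  have hsum : ∑ i, Finsupp.equivMapDomain σ.symm α i = ∑ i, α i := by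
    simpa using Equiv.sum_comp σ α
  have hmax : ∀ β, coeff β (rename σ.symm P) ≠ 0 →
      toLex β ≤ toLex (Finsupp.equivMapDomain σ.symm α) := by
    intro β hβ
    obtain ⟨γ, rfl⟩ : ∃ γ, Finsupp.equivMapDomain σ.symm γ = β :=
      ⟨Finsupp.equivMapDomain σ β, by ext; simp⟩
    rw [hcoeff] at hβ
    rcases eq_or_ne γ α with rfl | hγα
    · exact le_rfl
    obtain ⟨j, hj, hlt⟩ := hlex γ hγα hβ
    exact le_of_lt (Finsupp.Lex.lt_iff.2 ⟨j, fun k hk => by simp [hlt k hk], by simpa using hj⟩)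
  rw [volume_sublevel_inter_cube, ← volume_sublevel_rename_inter_openCube σ.symm,
    ← totalDegree_renameEquiv σ.symm]
  exact volume_sublevel_inter_openCube_le_of_lex _ _ (by rwa [hcoeff]) hmax (hsum ▸ hpos) hs
    (by rwa [hcoeff, hsum]) hr

theorem volume_sublevel_inter_cube_le {n : ℕ} {P : MvPolynomial (Fin n) ℝ} {α : Fin n →₀ ℕ}
    (h : IsAdmissibleIndex P α) {δ r : ℝ} (hδ : 0 < δ) (hr : 0 < r) :
    volume (sublevel P δ ∩ cube n r) ≤
      ENNReal.ofReal (8 ^ n *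
        ((P.totalDegree : ℝ) * (4 / |coeff α P| ^ ((1 : ℝ) / (∑ i, α i : ℝ))) *
            δ ^ ((1 : ℝ) / (∑ i, α i : ℝ)) * r ^ (n - 1) +
          ((P.totalDegree : ℝ) * (4 / |coeff α P| ^ ((1 : ℝ) / (∑ i, α i : ℝ))) *
            δ ^ ((1 : ℝ) / (∑ i, α i : ℝ))) ^ n)) := by
  have ha : 0 < |coeff α P| := abs_pos.2 h.1
  have hm : (∑ i, α i : ℝ) = ((∑ i, α i : ℕ) : ℝ) := (Nat.cast_sum _ _).symm
  have hs : |coeff α P| * ((δ / |coeff α P|) ^ ((1 : ℝ) / (∑ i, α i : ℝ))) ^ ∑ i, α i = δ := by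
    rw [hm, one_div, Real.rpow_inv_natCast_pow (by positivity) h.sum_pos.ne',
      mul_div_cancel₀ _ ha.ne']
  have hT : (P.totalDegree : ℝ) * (4 / |coeff α P| ^ ((1 : ℝ) / (∑ i, α i : ℝ))) *
      δ ^ ((1 : ℝ) / (∑ i, α i : ℝ)) =
        4 * P.totalDegree * (δ / |coeff α P|) ^ ((1 : ℝ) / (∑ i, α i : ℝ)) := by
    rw [Real.div_rpow hδ.le ha.le]
    ring
  rw [hT]
  exact volume_sublevel_inter_cube_le_of_isAdmissibleIndex h (by positivity) hs.ge hr.le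

lemma mul_add_pow_le_max_mul {C B u R : ℝ} (n : ℕ) (hC : 0 ≤ C) (hu : 0 ≤ u)
    (hR : 0 ≤ R) :
    C * (B * u * R + (B * u) ^ n) ≤ max 1 (C * max B (B ^ n)) * (u * R + u ^ n) := by
  have h1 : C * B ≤ max 1 (C * max B (B ^ n)) :=
    (mul_le_mul_of_nonneg_left (le_max_left _ _) hC).trans (le_max_right _ _)
  have h2 : C * B ^ n ≤ max 1 (C * max B (B ^ n)) :=
    (mul_le_mul_of_nonneg_left (le_max_right _ _) hC).trans (le_max_right _ _)
  calc C * (B * u * R + (B * u) ^ n) = C * B * (u * R) + C * B ^ n * u ^ n := by ring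
    _ ≤ max 1 (C * max B (B ^ n)) * (u * R) + max 1 (C * max B (B ^ n)) * u ^ n := by
        gcongr
    _ = _ := by ring

/-- **Theorem 3.1.** For a polynomial `P` of degree `d` with admissible index `α`, and
`μ(α) = 4/|a_α|^{1/|α|}`, one has, with a constant `C > 0` depending only on `n`,
`vol (V_δ ∩ Δ_r^n) ≤ C [d μ(α) δ^{1/|α|} r^{n-1} + (d μ(α) δ^{1/|α|})^n]`, and in
particular, with a constant `C' > 0` depending only on `n`, `d` and `|a_α|^{1/|α|}`,
`vol (V_δ ∩ Δ_r^n) ≤ C' [δ^{1/|α|} r^{n-1} + δ^{n/|α|}]`. -/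
theorem statement5 (n : ℕ) :
    (∃ C : ℝ, 0 < C ∧
      ∀ (P : MvPolynomial (Fin n) ℝ) (α : Fin n →₀ ℕ), IsAdmissibleIndex P α →
        ∀ δ : ℝ, 0 < δ → ∀ r : ℝ, 0 < r →
          volume (sublevel P δ ∩ cube n r) ≤
            ENNReal.ofReal (C *
              ((P.totalDegree : ℝ) * (4 / |coeff α P| ^ ((1 : ℝ) / (∑ i, α i : ℝ))) *
                  δ ^ ((1 : ℝ) / (∑ i, α i : ℝ)) * r ^ (n - 1) +
                ((P.totalDegree : ℝ) * (4 / |coeff α P| ^ ((1 : ℝ) / (∑ i, α i : ℝ))) *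
                  δ ^ ((1 : ℝ) / (∑ i, α i : ℝ))) ^ n))) ∧
    (∀ (d : ℕ) (A : ℝ), ∃ C' : ℝ, 0 < C' ∧
      ∀ (P : MvPolynomial (Fin n) ℝ) (α : Fin n →₀ ℕ), IsAdmissibleIndex P α →
        P.totalDegree = d → |coeff α P| ^ ((1 : ℝ) / (∑ i, α i : ℝ)) = A →
        ∀ δ : ℝ, 0 < δ → ∀ r : ℝ, 0 < r →
          volume (sublevel P δ ∩ cube n r) ≤
            ENNReal.ofReal (C' *
              (δ ^ ((1 : ℝ) / (∑ i, α i : ℝ)) * r ^ (n - 1) +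
                δ ^ ((n : ℝ) / (∑ i, α i : ℝ))))) := by
  refine ⟨⟨8 ^ n, by positivity, fun P α h δ hδ r hr => volume_sublevel_inter_cube_le h hδ hr⟩,
    fun d A => ⟨max 1 (8 ^ n * max (d * (4 / A)) ((d * (4 / A)) ^ n)),
      lt_max_of_lt_left one_pos, fun P α h hd hA δ hδ r hr => ?_⟩⟩
  have hδn : δ ^ ((n : ℝ) / (∑ i, α i : ℝ)) = (δ ^ ((1 : ℝ) / (∑ i, α i : ℝ))) ^ n := by
    rw [← Real.rpow_natCast, ← Real.rpow_mul hδ.le, one_div_mul_eq_div]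
  refine (volume_sublevel_inter_cube_le h hδ hr).trans (ENNReal.ofReal_le_ofReal ?_)
  rw [hd, hA, hδn]
  exact mul_add_pow_le_max_mul n (by positivity) (by positivity) (by positivity)
end

section
/- Let n ≥ 2 and let P be a real polynomial on ℝ^n. Define P_1 := P and P_m(x) := det(∂P_i/∂x_j)_{1 ≤ i,j ≤ m−1} for 2 ≤ m ≤ n+1. If deg P_{l+1} ≥ 1 for some 1 ≤ l ≤ n, then P_1, …, P_l are algebraically independent over ℝ: there is no polynomial Q ∈ ℝ[y_1, …, y_l], Q ≢ 0, satisfying Q(P_1(x), …, P_l(x)) = 0 for all x ∈ ℝ^n. -/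
/-!
Jacobian criterion. If `Q(φ₁, …, φₗ) = 0`, differentiating along `x_{e j}` shows by the chain rule
that the vector `(∂Q/∂yᵢ)(φ)` lies in the left kernel of the minor `(∂φᵢ/∂x_{e j})ᵢⱼ`, which is
trivial when its determinant is nonzero. So every `∂Q/∂yᵢ` is again a relation among the `φᵢ`, of
smaller total degree; by induction they all vanish, and in characteristic zero this forces `Q` to
be a constant, hence `0`. For the theorem, `P_{l+1}` is such a minor for `P_1, …, P_l`, nonzero
because it has positive degree, and a polynomial vanishing on all of `ℝⁿ` is zero.
-/

open MvPolynomial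

/-- The sequence `P_1 = P`, `P_m = det (∂P_i/∂x_j)_{1 ≤ i,j ≤ m-1}` for `2 ≤ m ≤ n+1`. -/
noncomputable def Pseq {n : ℕ} (P : MvPolynomial (Fin n) ℝ) : ℕ → MvPolynomial (Fin n) ℝ
  | 0 => 0
  | 1 => P
  | m + 2 =>
    if h : m + 1 ≤ n then
      Matrix.det (Matrix.of fun i j : Fin (m + 1) =>
        MvPolynomial.pderiv (Fin.castLE h j) (Pseq P ((i : ℕ) + 1)))
    else 0
  termination_by m => m
  decreasing_by omega

namespace MvPolynomial

variable {R σ ι : Type*}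

section CommSemiring

variable [CommSemiring R]

theorem totalDegree_pderiv_lt (i : σ) {Q : MvPolynomial σ R} (hQ : Q.totalDegree ≠ 0) :
    (pderiv i Q).totalDegree < Q.totalDegree := by
  rw [totalDegree, Finset.sup_lt_iff (Nat.pos_of_ne_zero hQ)]
  intro m hm
  have hcoeff : coeff (m + Finsupp.single i 1) Q ≠ 0 :=
    left_ne_zero_of_mul (by rwa [mem_support_iff, coeff_pderiv] at hm)
  have := le_totalDegree (mem_support_iff.2 hcoeff)
  rw [Finsupp.sum_add_index' (fun _ => rfl) (fun _ _ _ => rfl),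
    Finsupp.sum_single_index rfl] at this
  omega

theorem exists_pderiv_ne_zero [NoZeroDivisors R] [CharZero R] {Q : MvPolynomial σ R}
    (hQ : Q.totalDegree ≠ 0) : ∃ i, pderiv i Q ≠ 0 := by
  obtain ⟨m, hm, i, hi⟩ : ∃ m ∈ Q.support, ∃ i, m i ≠ 0 := by
    simpa [totalDegree_eq_zero_iff] using hQ
  refine ⟨i, fun h => ?_⟩
  have hle : Finsupp.single i 1 ≤ m := Finsupp.single_le_iff.2 (Nat.one_le_iff_ne_zero.2 hi)
  have := congr(coeff (m - Finsupp.single i 1) $h)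
  rw [coeff_pderiv, tsub_add_cancel_of_le hle, coeff_zero] at this
  exact mul_ne_zero (mem_support_iff.1 hm) (Nat.cast_add_one_ne_zero _) this

theorem pderiv_aeval [Fintype ι] (φ : ι → MvPolynomial σ R) (j : σ) (Q : MvPolynomial ι R) :
    pderiv j (aeval φ Q) = ∑ i, aeval φ (pderiv i Q) * pderiv j (φ i) := by
  classical
  induction Q using MvPolynomial.induction_on with
  | C a => simp
  | add p q hp hq => simp only [map_add, hp, hq, add_mul, Finset.sum_add_distrib]
  | mul_X p i hp =>
    rw [map_mul, aeval_X, pderiv_mul, hp, Finset.sum_mul]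
    simp only [pderiv_mul, pderiv_X, map_add, map_mul, aeval_X, add_mul, Finset.sum_add_distrib]
    congr 1
    · exact Finset.sum_congr rfl fun _ _ => mul_right_comm ..
    · simp [Pi.single_apply]

end CommSemiring

section Jacobian

variable [CommRing R] [NoZeroDivisors R] [Fintype ι] [DecidableEq ι]

theorem aeval_pderiv_eq_zero_of_det_ne_zero (φ : ι → MvPolynomial σ R) (e : ι → σ)
    (hdet : (Matrix.of fun i j => pderiv (e j) (φ i)).det ≠ 0) {Q : MvPolynomial ι R}
    (hQ : aeval φ Q = 0) (i : ι) : aeval φ (pderiv i Q) = 0 := by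
  have hv : Matrix.vecMul (fun i => aeval φ (pderiv i Q))
      (.of fun i j => pderiv (e j) (φ i)) = 0 := by
    funext j
    simp only [Matrix.vecMul, dotProduct, Matrix.of_apply, Pi.zero_apply]
    rw [← pderiv_aeval, hQ, map_zero]
  exact congrFun (Matrix.eq_zero_of_vecMul_eq_zero hdet hv) i

theorem algebraicIndependent_of_det_pderiv_ne_zero [CharZero R] (φ : ι → MvPolynomial σ R)
    (e : ι → σ) (hdet : (Matrix.of fun i j => pderiv (e j) (φ i)).det ≠ 0) :
    AlgebraicIndependent R φ := by
  rw [algebraicIndependent_iff]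
  intro Q hQ
  induction hd : Q.totalDegree using Nat.strong_induction_on generalizing Q with
  | _ d ih =>
  rcases eq_or_ne Q.totalDegree 0 with h0 | h0
  · rw [totalDegree_eq_zero_iff_eq_C.1 h0] at hQ ⊢
    rw [aeval_C, algebraMap_eq, C_eq_zero] at hQ
    rw [hQ, C_0]
  · obtain ⟨i, hi⟩ := exists_pderiv_ne_zero h0
    exact absurd (ih _ (hd ▸ totalDegree_pderiv_lt i h0) _
      (aeval_pderiv_eq_zero_of_det_ne_zero φ e hdet hQ i) rfl) hi

end Jacobian

end MvPolynomial

theorem Pseq_add_two {n m : ℕ} (P : MvPolynomial (Fin n) ℝ) (h : m + 1 ≤ n) :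
    Pseq P (m + 2) = (Matrix.of fun i j : Fin (m + 1) =>
      pderiv (Fin.castLE h j) (Pseq P (i + 1))).det := by
  rw [Pseq, dif_pos h]

theorem statement9_general (n : ℕ) (P : MvPolynomial (Fin n) ℝ)
    (l : ℕ) (hl1 : 1 ≤ l) (hln : l ≤ n)
    (hdeg : 1 ≤ (Pseq P (l + 1)).totalDegree) :
    ¬ ∃ Q : MvPolynomial (Fin l) ℝ, Q ≠ 0 ∧
        ∀ x : Fin n → ℝ,
          eval (fun j : Fin l => eval x (Pseq P ((j : ℕ) + 1))) Q = 0 := by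
  rintro ⟨Q, hQ, hev⟩
  obtain ⟨m, rfl⟩ := Nat.exists_eq_add_of_le' hl1
  have hdet : (Matrix.of fun i j : Fin (m + 1) =>
      pderiv (Fin.castLE hln j) (Pseq P (i + 1))).det ≠ 0 := by
    rw [← Pseq_add_two]
    rintro h
    simp [h] at hdeg
  refine hQ ((algebraicIndependent_of_det_pderiv_ne_zero _ _ hdet).eq_zero_of_aeval_eq_zero Q ?_)
  refine MvPolynomial.funext fun x => ?_
  rw [map_zero]
  exact (comp_aeval_apply _ (aeval x) Q).trans (hev x)

/-- If `deg P_{l+1} ≥ 1` for some `1 ≤ l ≤ n`, then `P_1, …, P_l` are algebraically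
independent over `ℝ`: there is no nonzero polynomial `Q ∈ ℝ[y_1, …, y_l]` with
`Q(P_1(x), …, P_l(x)) = 0` for all `x ∈ ℝ^n`. -/
theorem statement9 (n : ℕ) (hn : 2 ≤ n) (P : MvPolynomial (Fin n) ℝ)
    (l : ℕ) (hl1 : 1 ≤ l) (hln : l ≤ n)
    (hdeg : 1 ≤ (Pseq P (l + 1)).totalDegree) :
    ¬ ∃ Q : MvPolynomial (Fin l) ℝ, Q ≠ 0 ∧
        ∀ x : Fin n → ℝ,
          eval (fun j : Fin l => eval x (Pseq P ((j : ℕ) + 1))) Q = 0 :=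
  statement9_general n P l hl1 hln hdeg
end

section
/- Let P be a real polynomial on ℝ^n with P(0) = 0, and let α be an admissible index for P. Then for every μ ∈ (0, 1/|α|) there exists a constant C > 0 independent of r such that for all r > 0, ∫_{Δ_r^n} |P(x)|^{−μ} dλ_n(x) ≤ C·r^{n − μ|α|}. -/
/-!
Permuting the coordinates makes `α` the lexicographically largest exponent of `P`. Viewed as a
polynomial in the first variable, `P` then has degree `α 0`, and its leading coefficient `Q` is a
polynomial in the remaining variables whose lexicographically largest exponent is the tail of `α`.
The bound therefore follows by induction on `n`, integrating out the first variable with the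
one-variable estimate and then applying the induction hypothesis to `Q`.

In one variable, a real polynomial `p` of degree `d` with leading coefficient `c` satisfies
`|p t| = |c| ∏ |t - z|` over its complex roots `z`. So `|p t| < |c| δ ^ d` forces `t` to lie within
`δ` of the real part of some root, and `{|p| < ε}` has measure at most `2 d (ε / |c|) ^ (1 / d)`.
By the layer-cake formula, this sublevel bound gives
`∫_{-r}^{r} |p| ^ (-μ) ≤ C |c| ^ (-μ) r ^ (1 - μ d)` as soon as `μ d < 1`.
-/

open MeasureTheory Metric MvPolynomial
open scoped ENNReal NNReal

open Set Filter Topology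

theorem lintegral_Ioi_min_rpow_neg_le {K V q : ℝ} (hK : 0 < K) (hV : 0 < V) (hq : 1 < q) :
    ∫⁻ s in Ioi (0 : ℝ), min (ENNReal.ofReal V) (ENNReal.ofReal (K * s ^ (-q))) ≤
      ENNReal.ofReal (q / (q - 1) * K ^ q⁻¹ * V ^ (1 - q⁻¹)) := by
  set s₀ := (K / V) ^ q⁻¹ with hs₀_def
  have hs₀ : 0 < s₀ := by positivity
  have hVs₀ : V * s₀ = K ^ q⁻¹ * V ^ (1 - q⁻¹) := by
    rw [hs₀_def, Real.div_rpow hK.le hV.le, Real.rpow_sub hV, Real.rpow_one]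
    ring
  -- the two regimes of the minimum meet at `s₀`, where `V = K * s₀ ^ (-q)`
  have hKs₀ : K * s₀ ^ (1 - q) = V * s₀ := by
    have hKV : 0 < K / V := by positivity
    rw [hs₀_def, ← Real.rpow_mul hKV.le, mul_sub, mul_one, inv_mul_cancel₀ (by linarith),
      Real.rpow_sub hKV, Real.rpow_one]
    field_simp
  have hnear : ∫⁻ s in Ioc 0 s₀, min (ENNReal.ofReal V) (ENNReal.ofReal (K * s ^ (-q))) ≤
      ENNReal.ofReal (V * s₀) := by
    calc _ ≤ ∫⁻ _ in Ioc 0 s₀, ENNReal.ofReal V := lintegral_mono fun _ => min_le_left _ _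
      _ = ENNReal.ofReal (V * s₀) := by
        rw [setLIntegral_const, Real.volume_Ioc, sub_zero, ENNReal.ofReal_mul hV.le]
  have hfar : ∫⁻ s in Ioi s₀, min (ENNReal.ofReal V) (ENNReal.ofReal (K * s ^ (-q))) ≤
      ENNReal.ofReal (K * s₀ ^ (1 - q) / (q - 1)) := by
    have hint : IntegrableOn (fun s : ℝ => K * s ^ (-q)) (Ioi s₀) :=
      (integrableOn_Ioi_rpow_of_lt (by linarith) hs₀).const_mul K
    have hnonneg : ∀ᵐ s ∂volume.restrict (Ioi s₀), 0 ≤ K * s ^ (-q) :=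
      (ae_restrict_iff' measurableSet_Ioi).2 (ae_of_all _ fun s hs =>
        by have : 0 < s := hs₀.trans hs; positivity)
    calc _ ≤ ∫⁻ s in Ioi s₀, ENNReal.ofReal (K * s ^ (-q)) :=
          lintegral_mono fun _ => min_le_right _ _
      _ = ENNReal.ofReal (∫ s in Ioi s₀, K * s ^ (-q)) :=
          (ofReal_integral_eq_lintegral_ofReal hint hnonneg).symm
      _ = ENNReal.ofReal (K * s₀ ^ (1 - q) / (q - 1)) := by
        rw [integral_const_mul, integral_Ioi_rpow_of_lt (by linarith) hs₀,
          show -q + 1 = -(q - 1) by ring, neg_div_neg_eq, neg_sub, sub_eq_add_neg, mul_div_assoc]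
  rw [← Ioc_union_Ioi_eq_Ioi hs₀.le, lintegral_union measurableSet_Ioi Ioc_disjoint_Ioi_same]
  calc _ ≤ ENNReal.ofReal (V * s₀) + ENNReal.ofReal (K * s₀ ^ (1 - q) / (q - 1)) :=
        add_le_add hnear hfar
    _ = ENNReal.ofReal (q / (q - 1) * K ^ q⁻¹ * V ^ (1 - q⁻¹)) := by
        have hq' : q - 1 ≠ 0 := by linarith
        rw [← ENNReal.ofReal_add (by positivity) (by positivity), hKs₀, mul_assoc, ← hVs₀]
        congr 1
        field_simp
        ring

theorem lintegral_rpow_neg_le_of_measure_lt_le {α : Type*} [MeasurableSpace α] {ν : Measure α}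
    {g : α → ℝ} (hg : Measurable g) {μ κ K V : ℝ} (hμ : 0 < μ) (hμκ : μ < κ) (hK : 0 < K)
    (hV : 0 < V) (hνV : ν univ ≤ ENNReal.ofReal V)
    (hνK : ∀ ε, 0 < ε → ν {x | g x < ε} ≤ ENNReal.ofReal (K * ε ^ κ)) :
    ∫⁻ x, ENNReal.ofReal (g x) ^ (-μ) ∂ν ≤
      ENNReal.ofReal (κ / (κ - μ) * K ^ (μ / κ) * V ^ (1 - μ / κ)) := by
  have hκ : 0 < κ := hμ.trans hμκ
  have hpos : ∀ᵐ x ∂ν, 0 < g x := by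
    have hlim : Tendsto (fun ε : ℝ => ENNReal.ofReal (K * ε ^ κ)) (𝓝[>] 0) (𝓝 0) := by
      have : ContinuousAt (fun ε : ℝ => ENNReal.ofReal (K * ε ^ κ)) 0 :=
        ENNReal.continuous_ofReal.continuousAt.comp
          ((Real.continuousAt_rpow_const 0 κ (Or.inr hκ.le)).const_mul K)
      simpa [Real.zero_rpow hκ.ne'] using this.tendsto.mono_left nhdsWithin_le_nhds
    have hnull : ν {x | g x ≤ 0} = 0 := by
      refine le_antisymm (ge_of_tendsto hlim ?_) bot_le
      filter_upwards [self_mem_nhdsWithin] with ε hε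
      exact (measure_mono (ofPred_subset_ofPred.2 fun x hx => hx.trans_lt hε)).trans (hνK ε hε)
    simpa [ae_iff] using hnull
  have hlayer : ∫⁻ x, ENNReal.ofReal (g x) ^ (-μ) ∂ν =
      ∫⁻ s in Ioi 0, ν {x | s < g x ^ (-μ)} := by
    rw [← lintegral_eq_lintegral_meas_lt ν (hpos.mono fun x hx => by positivity)
      (hg.pow_const _).aemeasurable]
    exact lintegral_congr_ae (hpos.mono fun x hx => ENNReal.ofReal_rpow_of_pos hx)
  have hdist : ∀ s ∈ Ioi (0 : ℝ), ν {x | s < g x ^ (-μ)} ≤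
      min (ENNReal.ofReal V) (ENNReal.ofReal (K * s ^ (-(κ / μ)))) := by
    intro s hs
    refine le_min ((measure_mono (subset_univ _)).trans hνV) ?_
    calc ν {x | s < g x ^ (-μ)} ≤ ν {x | g x < s ^ (-μ⁻¹)} := by
          refine measure_mono fun x hx => ?_
          rcases le_or_gt (g x) 0 with hx0 | hx0
          · exact hx0.trans_lt (Real.rpow_pos_of_pos hs _)
          · have := Real.rpow_lt_rpow_of_neg hs hx (neg_neg_of_pos (inv_pos.2 hμ))
            rwa [← Real.rpow_mul hx0.le, neg_mul_neg, mul_inv_cancel₀ hμ.ne', Real.rpow_one]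
              at this
      _ ≤ ENNReal.ofReal (K * (s ^ (-μ⁻¹)) ^ κ) := hνK _ (Real.rpow_pos_of_pos hs _)
      _ = ENNReal.ofReal (K * s ^ (-(κ / μ))) := by
          rw [← Real.rpow_mul hs.le, neg_mul, inv_mul_eq_div]
  calc ∫⁻ x, ENNReal.ofReal (g x) ^ (-μ) ∂ν
      ≤ ∫⁻ s in Ioi 0, min (ENNReal.ofReal V) (ENNReal.ofReal (K * s ^ (-(κ / μ)))) :=
        hlayer ▸ setLIntegral_mono' measurableSet_Ioi hdist
    _ ≤ _ := lintegral_Ioi_min_rpow_neg_le hK hV ((one_lt_div hμ).2 hμκ)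
    _ = _ := by
        rw [inv_div]
        congr 3
        field_simp

namespace Polynomial

theorem abs_eval_eq_mul_prod_roots (p : ℝ[X]) (t : ℝ) :
    |p.eval t| = |p.leadingCoeff| *
      ((p.map (algebraMap ℝ ℂ)).roots.map fun z => ‖(t : ℂ) - z‖).prod := by
  have h := (IsAlgClosed.splits (p.map (algebraMap ℝ ℂ))).eval_eq_prod_roots (t : ℂ)
  rw [eval_map_algebraMap, leadingCoeff_map, ← Complex.coe_algebraMap,
    aeval_algebraMap_apply_eq_algebraMap_eval] at h
  have hnorm (s : Multiset ℂ) : ‖s.prod‖ = (s.map (‖·‖)).prod :=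
    map_multiset_prod (normHom : ℂ →*₀ ℝ) s
  apply_fun norm at h
  rw [norm_mul, hnorm, Multiset.map_map] at h
  simpa [Function.comp_def, Complex.norm_real] using h

theorem volume_abs_eval_lt_le (p : ℝ[X]) {δ : ℝ} (hδ : 0 ≤ δ) :
    volume {t | |p.eval t| < |p.leadingCoeff| * δ ^ p.natDegree} ≤
      ENNReal.ofReal (2 * p.natDegree * δ) := by
  set roots := (p.map (algebraMap ℝ ℂ)).roots
  have hcard : Multiset.card roots = p.natDegree := by
    rw [← (IsAlgClosed.splits _).natDegree_eq_card_roots, natDegree_map]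
  have hsub : {t | |p.eval t| < |p.leadingCoeff| * δ ^ p.natDegree} ⊆
      ⋃ z ∈ roots.toFinset, ball z.re δ := by
    intro t ht
    by_contra hout
    simp only [mem_iUnion, mem_ball, Real.dist_eq, not_exists, not_lt,
      Multiset.mem_toFinset] at hout
    refine (?_ : |p.leadingCoeff| * δ ^ p.natDegree ≤ |p.eval t|).not_gt ht
    rw [abs_eval_eq_mul_prod_roots, ← hcard, ← Multiset.prod_replicate, ← Multiset.map_const']
    refine mul_le_mul_of_nonneg_left (Multiset.prod_map_le_prod_map₀ _ _ (fun _ _ => hδ)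
      fun z hz => (hout z hz).trans ?_) (abs_nonneg _)
    simpa using Complex.abs_re_le_norm ((t : ℂ) - z)
  calc volume {t | |p.eval t| < |p.leadingCoeff| * δ ^ p.natDegree}
      ≤ volume (⋃ z ∈ roots.toFinset, ball z.re δ) := measure_mono hsub
    _ ≤ ∑ z ∈ roots.toFinset, volume (ball z.re δ) := measure_biUnion_finset_le _ _
    _ = roots.toFinset.card * ENNReal.ofReal (2 * δ) := by simp [Real.volume_ball]
    _ ≤ p.natDegree * ENNReal.ofReal (2 * δ) := by
        gcongr
        exact hcard ▸ Multiset.toFinset_card_le roots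
    _ = ENNReal.ofReal (2 * p.natDegree * δ) := by
        rw [← ENNReal.ofReal_natCast, ← ENNReal.ofReal_mul (by positivity), mul_left_comm,
          mul_assoc]

theorem lintegral_Ioo_abs_eval_rpow_neg_le {p : ℝ[X]} {d : ℕ} (hp : p.degree ≤ d) {μ : ℝ}
    (hμ : 0 < μ) (hμd : μ * d < 1) {r : ℝ} (hr : 0 < r) :
    ∫⁻ t in Ioo (-r) r, ENNReal.ofReal |p.eval t| ^ (-μ) ≤
      ENNReal.ofReal ((2 * d) ^ (μ * d) * (2 * r) ^ (1 - μ * d) / (1 - μ * d)) *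
        ENNReal.ofReal |p.coeff d| ^ (-μ) := by
  have hC : 0 < (2 * d : ℝ) ^ (μ * d) * (2 * r) ^ (1 - μ * d) / (1 - μ * d) := by
    have : 0 < 1 - μ * d := by linarith
    rcases Nat.eq_zero_or_pos d with rfl | hd
    · simp [hr]
    · positivity
  rcases eq_or_ne (p.coeff d) 0 with hc | hc
  · rw [hc, abs_zero, ENNReal.ofReal_zero, ENNReal.zero_rpow_of_neg (neg_neg_of_pos hμ),
      ENNReal.mul_top (ENNReal.ofReal_pos.2 hC).ne']
    exact le_top
  have hnd : p.natDegree = d :=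
    natDegree_eq_of_le_of_coeff_ne_zero (natDegree_le_iff_degree_le.2 hp) hc
  have hc' : 0 < |p.coeff d| := abs_pos.2 hc
  rw [ENNReal.ofReal_rpow_of_pos hc', ← ENNReal.ofReal_mul hC.le]
  rcases Nat.eq_zero_or_pos d with rfl | hd
  · rw [eq_C_of_natDegree_eq_zero hnd, coeff_C_zero]
    simp only [eval_C, setLIntegral_const, Real.volume_Ioo, ENNReal.ofReal_rpow_of_pos hc',
      ← ENNReal.ofReal_mul (Real.rpow_nonneg hc'.le _)]
    refine le_of_eq (congrArg ENNReal.ofReal ?_)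
    simp only [CharP.cast_eq_zero, mul_zero, Real.rpow_zero, sub_zero, Real.rpow_one, div_one]
    ring
  have hd' : (0 : ℝ) < d := Nat.cast_pos.2 hd
  have hlc : p.leadingCoeff = p.coeff d := by rw [leadingCoeff, hnd]
  have hsub : ∀ ε, 0 < ε → volume.restrict (Ioo (-r) r) {t | |p.eval t| < ε} ≤
      ENNReal.ofReal (2 * d / |p.coeff d| ^ (d⁻¹ : ℝ) * ε ^ (d⁻¹ : ℝ)) := by
    intro ε hε
    set δ := ε ^ (d⁻¹ : ℝ) / |p.coeff d| ^ (d⁻¹ : ℝ) with hδ_def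
    have hδ : |p.coeff d| * δ ^ d = ε := by
      rw [hδ_def, div_pow, Real.rpow_inv_natCast_pow hε.le hd.ne',
        Real.rpow_inv_natCast_pow hc'.le hd.ne']
      field_simp
    have h := volume_abs_eval_lt_le p (δ := δ) (by positivity)
    rw [hlc, hnd, hδ] at h
    calc volume.restrict (Ioo (-r) r) {t | |p.eval t| < ε}
        ≤ volume {t | |p.eval t| < ε} := Measure.restrict_le_self _
      _ ≤ ENNReal.ofReal (2 * d * δ) := h
      _ = _ := by rw [hδ_def]; congr 1; ring
  refine (lintegral_rpow_neg_le_of_measure_lt_le (continuous_abs.comp p.continuous).measurable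
    hμ (by rwa [← one_div, lt_div_iff₀ hd']) (by positivity) (by positivity : (0 : ℝ) < 2 * r)
    ?_ hsub).trans_eq ?_
  · rw [Measure.restrict_apply_univ, Real.volume_Ioo, sub_neg_eq_add, two_mul]
  · congr 1
    rw [div_inv_eq_mul, Real.div_rpow (by positivity) (by positivity), ← Real.rpow_mul hc'.le,
      show (d : ℝ)⁻¹ * (μ * d) = μ by field_simp, Real.rpow_neg hc'.le]
    field_simp

end Polynomial

namespace Finsupp

variable {M : Type*} [Zero M] [LinearOrder M] {n : ℕ} {a b : M} {x y : Fin n →₀ M}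

theorem toLex_cons_lt_toLex_cons_iff :
    toLex (cons a x) < toLex (cons b y) ↔ a < b ∨ a = b ∧ toLex x < toLex y := by
  simp only [Lex.lt_iff, ofLex_toLex, Fin.exists_fin_succ, Fin.forall_iff_succ, cons_zero,
    cons_succ, Fin.succ_lt_succ_iff, Fin.not_lt_zero, Fin.succ_pos, false_implies, implies_true,
    true_implies, true_and, and_assoc, exists_and_left]

theorem toLex_cons_le_toLex_cons_iff :
    toLex (cons a x) ≤ toLex (cons b y) ↔ a < b ∨ a = b ∧ toLex x ≤ toLex y := by
  simp only [le_iff_lt_or_eq, toLex_cons_lt_toLex_cons_iff, toLex_inj, cons_injective2.eq_iff]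
  tauto

end Finsupp

namespace MvPolynomial

open Finsupp

variable {R : Type*} [CommSemiring R] {n : ℕ} {P : MvPolynomial (Fin (n + 1)) R}
  {α : Fin (n + 1) →₀ ℕ}

theorem degree_finSuccEquiv_le_of_toLex_le (h : ∀ β, coeff β P ≠ 0 → toLex β ≤ toLex α) :
    (finSuccEquiv R n P).degree ≤ α 0 := by
  refine Polynomial.degree_le_iff_coeff_zero _ _ |>.2 fun m hm => ?_
  ext β
  rw [finSuccEquiv_coeff_coeff, coeff_zero]
  by_contra hβ
  have := h _ hβ
  rw [← cons_tail α, toLex_cons_le_toLex_cons_iff] at this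
  have : m ≤ α 0 := by rcases this with h | ⟨h, -⟩ <;> omega
  exact hm.not_ge (by exact_mod_cast this)

theorem toLex_le_tail_of_coeff_finSuccEquiv_ne_zero
    (h : ∀ β, coeff β P ≠ 0 → toLex β ≤ toLex α) {β : Fin n →₀ ℕ}
    (hβ : coeff β ((finSuccEquiv R n P).coeff (α 0)) ≠ 0) :
    toLex β ≤ toLex (tail α) := by
  rw [finSuccEquiv_coeff_coeff] at hβ
  have := h _ hβ
  rw [← cons_tail α, toLex_cons_le_toLex_cons_iff] at this
  simpa using this

end MvPolynomial

theorem lintegral_pi_fin_succ {α : Type*} [MeasurableSpace α] (ν : Measure α) [SigmaFinite ν]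
    {n : ℕ} {f : (Fin (n + 1) → α) → ℝ≥0∞} (hf : Measurable f) :
    ∫⁻ x, f x ∂Measure.pi (fun _ => ν) =
      ∫⁻ x, ∫⁻ t, f (Fin.cons t x) ∂ν ∂Measure.pi (fun _ => ν) := by
  set E := MeasurableEquiv.piFinSuccAbove (fun _ : Fin (n + 1) => α) 0
  rw [← (measurePreserving_piFinSuccAbove (fun _ => ν) 0).symm.lintegral_comp_emb
      E.symm.measurableEmbedding,
    lintegral_prod_symm (fun z => f (E.symm z)) (hf.comp E.symm.measurable).aemeasurable]
  simp only [E, MeasurableEquiv.piFinSuccAbove_symm_apply, Fin.insertNthEquiv_zero]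
  rfl

theorem lintegral_pi_comp_perm {ι α : Type*} [Fintype ι] [MeasurableSpace α] (ν : Measure α)
    [SigmaFinite ν] (σ : Equiv.Perm ι) (f : (ι → α) → ℝ≥0∞) :
    ∫⁻ x, f (x ∘ σ) ∂Measure.pi (fun _ => ν) = ∫⁻ x, f x ∂Measure.pi (fun _ => ν) := by
  rw [← (measurePreserving_piCongrLeft (fun _ : ι => ν) σ).lintegral_comp_emb
    (MeasurableEquiv.measurableEmbedding _)]
  refine lintegral_congr fun x => congrArg f ?_
  ext i
  simp [MeasurableEquiv.coe_piCongrLeft, Equiv.piCongrLeft_apply]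

theorem lintegral_cube_eq_lintegral_pi (n : ℕ) (r : ℝ) (f : EuclideanSpace ℝ (Fin n) → ℝ≥0∞) :
    ∫⁻ x in cube n r, f x =
      ∫⁻ y, f (WithLp.toLp 2 y) ∂Measure.pi (fun _ => volume.restrict (Ioo (-r) r)) := by
  rw [← (PiLp.volume_preserving_toLp (Fin n)).setLIntegral_comp_preimage_emb
    (MeasurableEquiv.toLp 2 (Fin n → ℝ)).measurableEmbedding]
  have : WithLp.toLp 2 ⁻¹' cube n r = univ.pi fun _ : Fin n => Ioo (-r) r := by
    ext y
    simp [cube]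
  rw [this, volume_pi, Measure.restrict_pi_pi]

theorem MvPolynomial.exists_lintegral_pi_abs_eval_rpow_neg_le {n : ℕ}
    {P : MvPolynomial (Fin n) ℝ} {α : Fin n →₀ ℕ} (hα : coeff α P ≠ 0)
    (hlead : ∀ β, coeff β P ≠ 0 → toLex β ≤ toLex α) {μ : ℝ} (hμ : 0 < μ)
    (hμα : μ * ∑ i, (α i : ℝ) < 1) :
    ∃ C, 0 < C ∧ ∀ r, 0 < r →
      ∫⁻ x, ENNReal.ofReal |eval x P| ^ (-μ) ∂Measure.pi (fun _ => volume.restrict (Ioo (-r) r))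
        ≤ ENNReal.ofReal (C * r ^ ((n : ℝ) - μ * ∑ i, (α i : ℝ))) := by
  induction n with
  | zero =>
    obtain ⟨c, rfl⟩ := C_surjective (Fin 0) P
    have hc : 0 < |c| := abs_pos.2 (by simpa [Subsingleton.elim α 0] using hα)
    refine ⟨|c| ^ (-μ), by positivity, fun r hr => ?_⟩
    simp [ENNReal.ofReal_rpow_of_pos hc]
  | succ n ih =>
    set a := α 0
    set Q := (finSuccEquiv ℝ n P).coeff a
    set S := ∑ i, (Finsupp.tail α i : ℝ)
    have hsum : ∑ i, (α i : ℝ) = a + S := by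
      simp [S, a, Fin.sum_univ_succ, Finsupp.tail_apply]
    have hS : 0 ≤ μ * S := by positivity
    have hμa : μ * a < 1 := by nlinarith
    obtain ⟨C, hC, hQ⟩ := ih (P := Q) (α := Finsupp.tail α)
      (by rwa [finSuccEquiv_coeff_coeff, Finsupp.cons_tail])
      (fun β hβ => toLex_le_tail_of_coeff_finSuccEquiv_ne_zero hlead hβ) (by nlinarith)
    set C₁ : ℝ := (2 * a) ^ (μ * a) * 2 ^ (1 - μ * a) / (1 - μ * a)
    have hC₁ : 0 < C₁ := by
      have : 0 < 1 - μ * a := by linarith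
      rcases Nat.eq_zero_or_pos a with ha | ha
      · simp [C₁, ha]
      · positivity
    refine ⟨C₁ * C, by positivity, fun r hr => ?_⟩
    have hmeas {m : ℕ} (R : MvPolynomial (Fin m) ℝ) :
        Measurable fun x => ENNReal.ofReal |eval x R| ^ (-μ) :=
      ((continuous_abs.comp (continuous_eval R)).measurable.ennreal_ofReal).pow_const _
    have hslice (x : Fin n → ℝ) :
        ∫⁻ t in Ioo (-r) r, ENNReal.ofReal |eval (Fin.cons t x) P| ^ (-μ) ≤
          ENNReal.ofReal (C₁ * r ^ (1 - μ * a)) * ENNReal.ofReal |eval x Q| ^ (-μ) := by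
      simp_rw [eval_eq_eval_mv_eval']
      convert Polynomial.lintegral_Ioo_abs_eval_rpow_neg_le
        (Polynomial.degree_map_le.trans (degree_finSuccEquiv_le_of_toLex_le hlead)) hμ hμa hr
        using 3
      · rw [Real.mul_rpow zero_le_two hr.le]
        ring
      · rw [Polynomial.coeff_map]
    set ν := volume.restrict (Ioo (-r) r)
    calc ∫⁻ x, ENNReal.ofReal |eval x P| ^ (-μ) ∂Measure.pi (fun _ => ν)
        = ∫⁻ x : Fin n → ℝ, ∫⁻ t, ENNReal.ofReal |eval (Fin.cons t x : Fin (n + 1) → ℝ) P| ^ (-μ)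
            ∂ν ∂Measure.pi (fun _ => ν) := lintegral_pi_fin_succ ν (hmeas P)
      _ ≤ ∫⁻ x, ENNReal.ofReal (C₁ * r ^ (1 - μ * a)) * ENNReal.ofReal |eval x Q| ^ (-μ)
            ∂Measure.pi (fun _ => ν) := lintegral_mono hslice
      _ ≤ ENNReal.ofReal (C₁ * r ^ (1 - μ * a)) * ENNReal.ofReal (C * r ^ ((n : ℝ) - μ * S)) := by
          rw [lintegral_const_mul _ (hmeas Q)]
          gcongr
          exact hQ r hr
      _ = ENNReal.ofReal (C₁ * C * r ^ (((n + 1 : ℕ) : ℝ) - μ * ∑ i, (α i : ℝ))) := by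
          rw [← ENNReal.ofReal_mul (by positivity)]
          congr 1
          rw [hsum, Nat.cast_succ,
            show (n : ℝ) + 1 - μ * (a + S) = (1 - μ * a) + (n - μ * S) by ring,
            Real.rpow_add hr]
          ring

namespace IsAdmissibleIndex

variable {n : ℕ} {P : MvPolynomial (Fin n) ℝ} {α : Fin n →₀ ℕ}

theorem one_le_sum (h : IsAdmissibleIndex P α) : (1 : ℝ) ≤ ∑ i, (α i : ℝ) := by
  obtain ⟨-, σ, ⟨hn, h1⟩, -⟩ := h
  exact (Nat.one_le_cast.2 h1).trans
    (Finset.single_le_sum (fun i _ => Nat.cast_nonneg (α i)) (Finset.mem_univ _))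

theorem exists_perm_toLex_le (h : IsAdmissibleIndex P α) :
    ∃ σ : Equiv.Perm (Fin n), coeff (α.equivMapDomain σ.symm) (rename σ.symm P) ≠ 0 ∧
      ∀ β, coeff β (rename σ.symm P) ≠ 0 → toLex β ≤ toLex (α.equivMapDomain σ.symm) := by
  obtain ⟨hα, σ, -, hlex⟩ := h
  have hcoeff (γ : Fin n →₀ ℕ) :
      coeff (γ.equivMapDomain σ.symm) (rename σ.symm P) = coeff γ P := by
    rw [Finsupp.equivMapDomain_eq_mapDomain, coeff_rename_mapDomain _ σ.symm.injective]
  refine ⟨σ, by rwa [hcoeff], fun β hβ => ?_⟩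
  obtain ⟨γ, rfl⟩ : ∃ γ, γ.equivMapDomain σ.symm = β := ⟨β.equivMapDomain σ, by ext; simp⟩
  rw [hcoeff] at hβ
  rcases eq_or_ne γ α with rfl | hne
  · exact le_rfl
  obtain ⟨j, hj, hprefix⟩ := hlex γ hne hβ
  exact (Finsupp.Lex.lt_iff.2 ⟨j, fun k hk => by simpa using (hprefix k hk).symm, by simpa⟩).le

end IsAdmissibleIndex

theorem statement10_general (n : ℕ) (P : MvPolynomial (Fin n) ℝ)
    (α : Fin n →₀ ℕ) (hα : IsAdmissibleIndex P α)
    (μ : ℝ) (hμ0 : 0 < μ) (hμ : μ < 1 / (∑ i, α i : ℝ)) :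
    ∃ C : ℝ, 0 < C ∧ ∀ r : ℝ, 0 < r →
      ∫⁻ x in cube n r, (ENNReal.ofReal |eval (fun i => x i) P|) ^ (-μ) ≤
        ENNReal.ofReal (C * r ^ ((n : ℝ) - μ * (∑ i, α i : ℝ))) := by
  obtain ⟨σ, hcoeff, hlead⟩ := hα.exists_perm_toLex_le
  have hsum : ∑ i, (α.equivMapDomain σ.symm i : ℝ) = ∑ i, (α i : ℝ) := by
    simpa using Equiv.sum_comp σ fun i => (α i : ℝ)
  have hμα : μ * ∑ i, (α i : ℝ) < 1 := by
    rwa [lt_div_iff₀ (by linarith [hα.one_le_sum])] at hμ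
  obtain ⟨C, hC, hbound⟩ :=
    exists_lintegral_pi_abs_eval_rpow_neg_le hcoeff hlead hμ0 (hsum ▸ hμα)
  refine ⟨C, hC, fun r hr => ?_⟩
  rw [lintegral_cube_eq_lintegral_pi, ← lintegral_pi_comp_perm _ σ.symm]
  rw [hsum] at hbound
  simpa [eval_rename, Function.comp_def] using hbound r hr

/-- **Proposition 4.1.** Let `P` be a polynomial on `ℝ^n` with `P(0) = 0` and let `α` be
an admissible index for `P`. Then for every `μ ∈ (0, 1/|α|)` there is a constant `C > 0`
independent of `r` such that `∫_{Δ_r^n} |P|^{-μ} ≤ C r^{n - μ|α|}` for all `r > 0`. -/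
theorem statement10 (n : ℕ) (P : MvPolynomial (Fin n) ℝ)
    (hP0 : eval (fun _ => (0 : ℝ)) P = 0)
    (α : Fin n →₀ ℕ) (hα : IsAdmissibleIndex P α)
    (μ : ℝ) (hμ0 : 0 < μ) (hμ : μ < 1 / (∑ i, α i : ℝ)) :
    ∃ C : ℝ, 0 < C ∧ ∀ r : ℝ, 0 < r →
      ∫⁻ x in cube n r, (ENNReal.ofReal |eval (fun i => x i) P|) ^ (-μ) ≤
        ENNReal.ofReal (C * r ^ ((n : ℝ) - μ * (∑ i, α i : ℝ))) :=
  statement10_general n P α hα μ hμ0 hμ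
end

section
/- Let P(x, y) := (y − x³)² + (x − y³)² and set Z_1 := {(x, y) ∈ ℝ² : ∂P/∂x(x, y) = 0} = {(x, y) : y³ + 3x²y = 3x⁵ + x} and Z_2 := {(x, y) ∈ ℝ² : ∂P/∂y(x, y) = 0} = {(x, y) : x³ + 3y²x = 3y⁵ + y}. Then the pair (Z_1, Z_2) is separated at infinity. -/
/-! On `Z₁` we have `|y| (y² + 3x²) = |x| (3x⁴ + 1)`, so `|y|` grows like `|x|^{5/3}`: once
`|x| ≥ 3` this forces `|y| > 2|x|`, while `|x| ≤ 3` forces `|y| ≤ 10`. Symmetrically `|x| > 2|y|` on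
`Z₂` far out. A point of `Z₁` and a point of `Z₂` at distance `< 1` therefore both lie in a fixed
ball, so sequences as in the definition of separation at infinity do not exist, and the condition
holds vacuously; the origin lies on both curves. -/

open Metric MvPolynomial Filter

/-- A collection `S_1, …, S_k` of (closed) subsets of `ℝ^n` is *separated at infinity* if
`S := S_1 ∩ ⋯ ∩ S_k ≠ ∅` and for all sequences `a_{j,l} ∈ S_j` with `‖a_{j,l}‖ → ∞` and
`‖a_{j,l} - a_{m,l}‖ → 0` for all `j < m`, one has `d(a_{j,l}, S) → 0` for each `j`. -/
def SeparatedAtInfinity {n k : ℕ} (S : Fin k → Set (EuclideanSpace ℝ (Fin n))) : Prop :=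
  (⋂ j, S j).Nonempty ∧
  ∀ a : Fin k → ℕ → EuclideanSpace ℝ (Fin n),
    (∀ j l, a j l ∈ S j) →
    (∀ j, Tendsto (fun l => ‖a j l‖) atTop atTop) →
    (∀ j m : Fin k, j < m → Tendsto (fun l => ‖a j l - a m l‖) atTop (nhds 0)) →
    ∀ j, Tendsto (fun l => infDist (a j l) (⋂ i, S i)) atTop (nhds 0)

/-- The polynomial `P(x, y) = (y - x³)² + (x - y³)²`. -/
noncomputable def Pex : MvPolynomial (Fin 2) ℝ :=
  (X 1 - X 0 ^ 3) ^ 2 + (X 0 - X 1 ^ 3) ^ 2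

/-- `Z_1 = {(x,y) : y³ + 3x²y = 3x⁵ + x}`. -/
def Zone : Set (EuclideanSpace ℝ (Fin 2)) :=
  {p | (p 1) ^ 3 + 3 * (p 0) ^ 2 * p 1 = 3 * (p 0) ^ 5 + p 0}

/-- `Z_2 = {(x,y) : x³ + 3y²x = 3y⁵ + y}`. -/
def Ztwo : Set (EuclideanSpace ℝ (Fin 2)) :=
  {p | (p 0) ^ 3 + 3 * (p 1) ^ 2 * p 0 = 3 * (p 1) ^ 5 + p 1}

theorem eval_pderiv_zero_Pex_eq_zero_iff (v : Fin 2 → ℝ) :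
    eval v (pderiv 0 Pex) = 0 ↔ v 1 ^ 3 + 3 * v 0 ^ 2 * v 1 = 3 * v 0 ^ 5 + v 0 := by
  have hP : eval v (pderiv 0 Pex) = 2 * (3 * v 0 ^ 5 + v 0 - (v 1 ^ 3 + 3 * v 0 ^ 2 * v 1)) := by
    simp only [Pex, map_add, map_sub, map_mul, map_pow, Derivation.leibniz_pow, pderiv_X,
      Pi.single_apply, one_ne_zero, if_true, if_false, map_one, map_zero, eval_X, eval_ofNat,
      smul_eq_mul, nsmul_eq_mul, Nat.cast_ofNat]
    ring
  rw [hP]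
  constructor <;> intro h <;> linarith

theorem eval_pderiv_one_Pex_eq_zero_iff (v : Fin 2 → ℝ) :
    eval v (pderiv 1 Pex) = 0 ↔ v 0 ^ 3 + 3 * v 1 ^ 2 * v 0 = 3 * v 1 ^ 5 + v 1 := by
  have hP : eval v (pderiv 1 Pex) = 2 * (3 * v 1 ^ 5 + v 1 - (v 0 ^ 3 + 3 * v 1 ^ 2 * v 0)) := by
    simp only [Pex, map_add, map_sub, map_mul, map_pow, Derivation.leibniz_pow, pderiv_X,
      Pi.single_apply, zero_ne_one, if_true, if_false, map_one, map_zero, eval_X, eval_ofNat,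
      smul_eq_mul, nsmul_eq_mul, Nat.cast_ofNat]
    ring
  rw [hP]
  constructor <;> intro h <;> linarith

theorem abs_mul_sq_add_three_mul_sq_eq {x y : ℝ} (h : y ^ 3 + 3 * x ^ 2 * y = 3 * x ^ 5 + x) :
    |y| * (|y| ^ 2 + 3 * |x| ^ 2) = |x| * (3 * (|x| ^ 2) ^ 2 + 1) := by
  have h' : y * (y ^ 2 + 3 * x ^ 2) = x * (3 * (x ^ 2) ^ 2 + 1) := by linear_combination h
  have := congrArg abs h'
  rwa [abs_mul, abs_mul, abs_of_nonneg (by positivity : (0:ℝ) ≤ y ^ 2 + 3 * x ^ 2),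
    abs_of_nonneg (by positivity : (0:ℝ) ≤ 3 * (x ^ 2) ^ 2 + 1), ← sq_abs x, ← sq_abs y] at this

theorem two_mul_lt_of_mul_sq_add_three_mul_sq_eq {a b : ℝ} (hb : 0 ≤ b)
    (h : b * (b ^ 2 + 3 * a ^ 2) = a * (3 * (a ^ 2) ^ 2 + 1)) (ha : 3 ≤ a) : 2 * a < b := by
  by_contra! hba
  -- the left side is at most `14 a³`, the right side at least `3 a⁵ ≥ 27 a³`
  have hb2 : b ^ 2 + 3 * a ^ 2 ≤ 7 * a ^ 2 := by nlinarith
  have hlhs : b * (b ^ 2 + 3 * a ^ 2) ≤ 2 * a * (7 * a ^ 2) :=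
    mul_le_mul hba hb2 (by positivity) (by linarith)
  have ha2 : 9 * a ^ 3 ≤ a ^ 2 * a ^ 3 := by
    gcongr
    nlinarith
  nlinarith

theorem le_ten_of_mul_sq_add_three_mul_sq_eq {a b : ℝ} (ha0 : 0 ≤ a)
    (h : b * (b ^ 2 + 3 * a ^ 2) = a * (3 * (a ^ 2) ^ 2 + 1)) (ha : a ≤ 3) : b ≤ 10 := by
  by_contra! hb
  nlinarith [mul_le_mul ha ha ha0 (by norm_num), mul_nonneg ha0 ha0]

theorem abs_sub_apply_le_norm_sub {n : ℕ} (p q : EuclideanSpace ℝ (Fin n)) (i : Fin n) :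
    |p i - q i| ≤ ‖p - q‖ := by
  simpa using PiLp.norm_apply_le (p - q) i

theorem abs_le_three_of_mem_Zone_of_mem_Ztwo {p q : EuclideanSpace ℝ (Fin 2)} (hp : p ∈ Zone)
    (hq : q ∈ Ztwo) (hpq : ‖p - q‖ < 1) : |p 0| ≤ 3 := by
  by_contra! hp0
  have hq1 : |p 1| - 1 < |q 1| := by
    linarith [abs_sub_abs_le_abs_sub (p 1) (q 1), abs_sub_apply_le_norm_sub p q 1]
  have hq0 : |q 0| < |p 0| + 1 := by
    linarith [abs_sub_abs_le_abs_sub (q 0) (p 0), abs_sub_comm (p 0) (q 0),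
      abs_sub_apply_le_norm_sub p q 0]
  have hp1 : 2 * |p 0| < |p 1| := two_mul_lt_of_mul_sq_add_three_mul_sq_eq (abs_nonneg _)
    (abs_mul_sq_add_three_mul_sq_eq hp) hp0.le
  have hq0' : 2 * |q 1| < |q 0| := two_mul_lt_of_mul_sq_add_three_mul_sq_eq (abs_nonneg _)
    (abs_mul_sq_add_three_mul_sq_eq (x := q 1) (y := q 0) hq) (by linarith)
  linarith

theorem norm_lt_of_mem_Zone_of_mem_Ztwo {p q : EuclideanSpace ℝ (Fin 2)} (hp : p ∈ Zone)
    (hq : q ∈ Ztwo) (hpq : ‖p - q‖ < 1) : ‖p‖ < 11 := by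
  have hp0 := abs_le_three_of_mem_Zone_of_mem_Ztwo hp hq hpq
  have hp1 := le_ten_of_mul_sq_add_three_mul_sq_eq (abs_nonneg _)
    (abs_mul_sq_add_three_mul_sq_eq hp) hp0
  have hnorm : ‖p‖ ^ 2 = |p 0| ^ 2 + |p 1| ^ 2 := by
    simp [EuclideanSpace.real_norm_sq_eq, Fin.sum_univ_two]
  nlinarith [abs_nonneg (p 0), abs_nonneg (p 1), norm_nonneg p]

theorem separatedAtInfinity_of_close_points_bounded {n : ℕ}
    {S : Fin 2 → Set (EuclideanSpace ℝ (Fin n))} (hS : (⋂ j, S j).Nonempty) {δ R : ℝ}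
    (hδ : 0 < δ) (h : ∀ p ∈ S 0, ∀ q ∈ S 1, ‖p - q‖ < δ → ‖p‖ < R) : SeparatedAtInfinity S := by
  refine ⟨hS, fun a ha hnorm hclose _ => ?_⟩
  obtain ⟨l, hlR, hlδ⟩ := ((hnorm 0).eventually_ge_atTop R |>.and
    ((hclose 0 1 Fin.zero_lt_one).eventually (gt_mem_nhds hδ))).exists
  exact absurd (h _ (ha 0 l) _ (ha 1 l) hlδ) hlR.not_gt

/-- For `P(x,y) = (y - x³)² + (x - y³)²`, the zero sets `Z_1`, `Z_2` of `∂P/∂x`,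
`∂P/∂y` are given by the explicit equations above, and the pair `(Z_1, Z_2)` is
separated at infinity. -/
theorem statement16 :
    Zone = {p : EuclideanSpace ℝ (Fin 2) | eval (fun i => p i) (pderiv 0 Pex) = 0} ∧
    Ztwo = {p : EuclideanSpace ℝ (Fin 2) | eval (fun i => p i) (pderiv 1 Pex) = 0} ∧
    SeparatedAtInfinity ![Zone, Ztwo] := by
  refine ⟨?_, ?_, ?_⟩
  · ext p
    exact (eval_pderiv_zero_Pex_eq_zero_iff _).symm
  · ext p
    exact (eval_pderiv_one_Pex_eq_zero_iff _).symm
  · have hzero : (0 : EuclideanSpace ℝ (Fin 2)) ∈ ⋂ j, ![Zone, Ztwo] j :=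
      Set.mem_iInter.2 fun j => by fin_cases j <;> simp [Zone, Ztwo]
    exact separatedAtInfinity_of_close_points_bounded ⟨0, hzero⟩ one_pos
      fun p hp q hq => norm_lt_of_mem_Zone_of_mem_Ztwo hp hq
end
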